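/- arXiv:1103.2916 — 9 statements merged into one kernel-verified Lean document; each statement's English description precedes it below -/
import Mathlib

section
/- Let (V,g) be a real inner product space of dimension 2n with n ≥ 2 and orthonormal basis {e₁,…,e₂ₙ}. Let R and R' be (0,4)-tensors on V and S a symmetric bilinear form on V such that R = R' − (1/2n)ψ₁(S), where ψ₁(S)(x,y,z,w) = g(y,z)S(x,w) − g(x,z)S(y,w) + S(y,z)g(x,w) − S(x,z)g(y,w). For a (0,4)-tensor L define ρ_L(y,z) = Σᵢ L(eᵢ,y,z,eᵢ), τ_L = Σⱼ ρ_L(eⱼ,eⱼ), and the Weyl tensor W_L = L − (1/(2(n−1))){ψ₁(ρ_L) − (τ_L/(2n−1))π₁}, where π₁(x,y,z,w) = g(y,z)g(x,w) − g(x,z)g(y,w). Then W_R = W_{R'}, i.e. the Weyl tensor is invariant under the transformation R' ↦ R = R' − (1/2n)ψ₁(S). -/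
open scoped RealInnerProductSpace

/-- The Kulkarni–Nomizu-type `(0,4)`-tensor `ψ₁(S)` of a bilinear form `S`. -/
noncomputable def psi1 {V : Type*} [NormedAddCommGroup V] [InnerProductSpace ℝ V]
    (S : V → V → ℝ) (x y z w : V) : ℝ :=
  ⟪y, z⟫ * S x w - ⟪x, z⟫ * S y w + S y z * ⟪x, w⟫ - S x z * ⟪y, w⟫

/-- The `(0,4)`-tensor `π₁(x,y,z,w) = g(y,z)g(x,w) − g(x,z)g(y,w)`. -/
noncomputable def pi1 {V : Type*} [NormedAddCommGroup V] [InnerProductSpace ℝ V]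
    (x y z w : V) : ℝ :=
  ⟪y, z⟫ * ⟪x, w⟫ - ⟪x, z⟫ * ⟪y, w⟫

/-- The Ricci contraction of a `(0,4)`-tensor `L` with respect to an orthonormal basis. -/
noncomputable def ricci {V : Type*} [NormedAddCommGroup V] [InnerProductSpace ℝ V]
    {m : ℕ} (e : OrthonormalBasis (Fin m) ℝ V) (L : V → V → V → V → ℝ) (y z : V) : ℝ :=
  ∑ i, L (e i) y z (e i)

/-- The scalar curvature of a `(0,4)`-tensor `L` with respect to an orthonormal basis. -/
noncomputable def scal {V : Type*} [NormedAddCommGroup V] [InnerProductSpace ℝ V]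
    {m : ℕ} (e : OrthonormalBasis (Fin m) ℝ V) (L : V → V → V → V → ℝ) : ℝ :=
  ∑ j, ricci e L (e j) (e j)

/-- The Weyl tensor of a `(0,4)`-tensor `L` on a `2n`-dimensional real inner product
space with orthonormal basis `e`:
`W_L = L − (1/(2(n−1))){ψ₁(ρ_L) − (τ_L/(2n−1))π₁}`. -/
noncomputable def weyl {V : Type*} [NormedAddCommGroup V] [InnerProductSpace ℝ V]
    (n : ℕ) (e : OrthonormalBasis (Fin (2 * n)) ℝ V) (L : V → V → V → V → ℝ)
    (x y z w : V) : ℝ :=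
  L x y z w - (1 / (2 * ((n : ℝ) - 1))) *
    (psi1 (ricci e L) x y z w - (scal e L / (2 * (n : ℝ) - 1)) * pi1 x y z w)

/-- If `R = R' − (1/2n)ψ₁(S)` for a symmetric bilinear form `S` on a
`2n`-dimensional (`n ≥ 2`) real inner product space with orthonormal basis `e`, then
the Weyl tensors of `R` and `R'` coincide. -/
theorem statement_5 {V : Type*} [NormedAddCommGroup V] [InnerProductSpace ℝ V]
    (n : ℕ) (hn : 2 ≤ n)
    (e : OrthonormalBasis (Fin (2 * n)) ℝ V)
    (R R' : V → V → V → V → ℝ)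
    (S : V →ₗ[ℝ] V →ₗ[ℝ] ℝ) (hS : ∀ x y : V, S x y = S y x)
    (hRR' : ∀ x y z w : V,
      R x y z w = R' x y z w - (1 / (2 * (n : ℝ))) * psi1 (fun a b => S a b) x y z w) :
    ∀ x y z w : V, weyl n e R x y z w = weyl n e R' x y z w := by
  intro x y z w
  have hn2 : (2 : ℝ) ≤ (n : ℝ) := by exact_mod_cast hn
  have hn0 : (n : ℝ) ≠ 0 := by linarith
  have hn1 : (n : ℝ) - 1 ≠ 0 := by linarith
  have hn3 : 2 * (n : ℝ) - 1 ≠ 0 := by linarith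
  set tS : ℝ := ∑ i, S (e i) (e i) with htS
  have horth := orthonormal_iff_ite.mp e.orthonormal
  have h1 : ∀ y z : V, (∑ i, ⟪e i, z⟫ * S y (e i)) = S y z := by
    intro y z
    conv_rhs => rw [← e.sum_repr' z]
    rw [map_sum]
    exact Finset.sum_congr rfl fun i _ => by
      rw [map_smul]; simp [smul_eq_mul]
  have h2 : ∀ y z : V, (∑ i, S (e i) z * ⟪y, e i⟫) = S y z := by
    intro y z
    have := h1 z y
    calc (∑ i, S (e i) z * ⟪y, e i⟫) = ∑ i, ⟪e i, y⟫ * S z (e i) := by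
          refine Finset.sum_congr rfl fun i _ => ?_
          rw [hS (e i) z, real_inner_comm]; ring
      _ = S z y := h1 z y
      _ = S y z := (hS y z).symm
  have h3 : (∑ i : Fin (2 * n), ⟪(e i : V), e i⟫) = 2 * (n : ℝ) := by
    have : ∀ i : Fin (2 * n), ⟪(e i : V), e i⟫ = 1 := fun i => by
      simpa using horth i i
    simp [this, Finset.sum_const]
  have hric : ∀ y z : V, ricci e R y z =
      ricci e R' y z - (1 / (2 * (n : ℝ))) * (⟪y, z⟫ * tS + (2 * (n : ℝ) - 2) * S y z) := by
    intro y z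
    unfold ricci
    simp only [hRR', psi1]
    rw [Finset.sum_sub_distrib, ← Finset.mul_sum]
    congr 1
    have expand : (∑ i, (⟪y, z⟫ * S (e i) (e i) - ⟪(e i : V), z⟫ * S y (e i)
        + S y z * ⟪(e i : V), e i⟫ - S (e i) z * ⟪y, e i⟫))
        = ⟪y, z⟫ * tS - (∑ i, ⟪(e i : V), z⟫ * S y (e i))
          + S y z * (∑ i, ⟪(e i : V), e i⟫) - (∑ i, S (e i) z * ⟪y, e i⟫) := by
      rw [Finset.sum_sub_distrib, Finset.sum_add_distrib, Finset.sum_sub_distrib,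
        ← Finset.mul_sum, ← Finset.mul_sum, htS]
    rw [expand, h1, h2, h3]
    ring
  have hscal : scal e R = scal e R' - (1 / (2 * (n : ℝ))) * ((4 * (n : ℝ) - 2) * tS) := by
    unfold scal
    simp only [hric]
    rw [Finset.sum_sub_distrib, ← Finset.mul_sum]
    congr 1
    rw [Finset.sum_add_distrib]
    have hA : (∑ j, ⟪(e j : V), e j⟫ * tS) = 2 * (n : ℝ) * tS := by
      rw [← Finset.sum_mul, h3]
    have hB : (∑ j, (2 * (n : ℝ) - 2) * S (e j) (e j)) = (2 * (n : ℝ) - 2) * tS := by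
      rw [← Finset.mul_sum, htS]
    rw [hA, hB]; ring
  unfold weyl psi1 pi1
  rw [hRR', hscal]
  simp only [hric, psi1]
  field_simp
  ring
end

section
/- Let (V,g) be a real inner product space of dimension at least 4, and let B be a skew-symmetric bilinear form on V (B(y,z) = −B(z,y)). If the identity g(x,w)B(y,z) + g(y,w)B(z,x) + g(z,w)B(x,y) = 0 holds for all x,y,z,w ∈ V, then B = 0. -/
open scoped RealInnerProductSpace

/-- On a real inner product space of dimension at least `4`, a
skew-symmetric bilinear form `B` satisfying
`g(x,w)B(y,z) + g(y,w)B(z,x) + g(z,w)B(x,y) = 0` for all `x,y,z,w` is zero. -/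
theorem statement_6 {V : Type*} [NormedAddCommGroup V] [InnerProductSpace ℝ V]
    (hdim : 4 ≤ Module.finrank ℝ V)
    (B : V →ₗ[ℝ] V →ₗ[ℝ] ℝ) (hB : ∀ y z : V, B y z = - B z y)
    (h : ∀ x y z w : V, ⟪x, w⟫ * B y z + ⟪y, w⟫ * B z x + ⟪z, w⟫ * B x y = 0) :
    ∀ y z : V, B y z = 0 := by
  intro y z
  have hfd : FiniteDimensional ℝ V := FiniteDimensional.of_finrank_pos (by omega)
  set K : Submodule ℝ V := Submodule.span ℝ {y, z} with hK
  have hKle : Module.finrank ℝ K ≤ 2 := by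
    classical
    have h1 := finrank_span_le_card (R := ℝ) ({y, z} : Set V)
    refine h1.trans ?_
    simp only [Set.toFinset_insert, Set.toFinset_singleton]
    exact (Finset.card_insert_le _ _).trans (by simp)
  have horth : Module.finrank ℝ K + Module.finrank ℝ Kᗮ = Module.finrank ℝ V :=
    Submodule.finrank_add_finrank_orthogonal K
  have hpos : 0 < Module.finrank ℝ Kᗮ := by omega
  have hne : Kᗮ ≠ ⊥ := by
    intro hb
    rw [hb] at hpos
    simp [finrank_bot] at hpos
  obtain ⟨w, hwK, hw0⟩ := Submodule.exists_mem_ne_zero_of_ne_bot hne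
  have hy : ⟪y, w⟫ = 0 :=
    (Submodule.mem_orthogonal K w).mp hwK y (Submodule.subset_span (by simp))
  have hz : ⟪z, w⟫ = 0 :=
    (Submodule.mem_orthogonal K w).mp hwK z (Submodule.subset_span (by simp))
  have := h w y z w
  rw [hy, hz, real_inner_self_eq_norm_sq] at this
  have hnorm : ‖w‖ ^ 2 ≠ 0 := pow_ne_zero _ (norm_ne_zero_iff.mpr hw0)
  have : ‖w‖ ^ 2 * B y z = 0 := by linarith
  exact (mul_eq_zero.mp this).resolve_left hnorm
end

section
/- Let λ₁,λ₂,λ₃,λ₄ ∈ ℝ and let [·,·] be the skew-symmetric bilinear bracket on the real vector space 𝔤 with basis X₁,X₂,X₃,X₄ determined by [X₁,X₂] = −[X₃,X₄] = λ₁X₁ + λ₂X₂ + λ₃X₃ + λ₄X₄, [X₁,X₃] = [X₂,X₄] = λ₄X₁ − λ₃X₂ + λ₂X₃ − λ₁X₄, and [X₂,X₃] = [X₁,X₄] = 0. Then this bracket satisfies the Jacobi identity, so (𝔤,[·,·]) is a 4-dimensional real Lie algebra. -/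
/-! The Jacobiator `[[x,y],z] + [[y,z],x] + [[z,x],y]` is linear in `x` and invariant under
cyclic permutations, hence trilinear, so it vanishes once it vanishes on triples of basis
vectors; on those it is a finite computation with the structure constants. -/

namespace LinearMap

variable {R M : Type*} [CommRing R] [AddCommGroup M] [Module R M]

def jacobiator (B : M →ₗ[R] M →ₗ[R] M) (x y z : M) : M :=
  B (B x y) z + B (B y z) x + B (B z x) y

variable (B : M →ₗ[R] M →ₗ[R] M)

theorem jacobiator_rotate (x y z : M) : jacobiator B x y z = jacobiator B y z x := by
  unfold jacobiator; abel

theorem jacobiator_eq_zero_of_basis_left {ι : Type*} (b : Module.Basis ι R M) {y z : M}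
    (h : ∀ i, jacobiator B (b i) y z = 0) (x : M) : jacobiator B x y z = 0 := by
  let f : M →ₗ[R] M := B.flip z ∘ₗ B.flip y + B (B y z) + B.flip y ∘ₗ B z
  have hf : f = 0 := b.ext fun i => h i
  exact LinearMap.congr_fun hf x

theorem jacobiator_eq_zero_of_basis {ι : Type*} (b : Module.Basis ι R M)
    (h : ∀ i j k, jacobiator B (b i) (b j) (b k) = 0) (x y z : M) :
    jacobiator B x y z = 0 := by
  refine jacobiator_eq_zero_of_basis_left B b (fun i => ?_) x
  rw [jacobiator_rotate]
  refine jacobiator_eq_zero_of_basis_left B b (fun j => ?_) y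
  rw [jacobiator_rotate]
  refine jacobiator_eq_zero_of_basis_left B b (fun k => ?_) z
  rw [jacobiator_rotate]
  exact h i j k

theorem apply_self_eq_zero_of_skew [Invertible (2 : R)] (hskew : ∀ x y, B x y = -B y x) (v : M) :
    B v v = 0 := by
  have h2 : (2 : R) • B v v = 0 := by
    rw [two_smul]; nth_rewrite 1 [hskew]; exact neg_add_cancel _
  calc B v v = (⅟2 : R) • (2 : R) • B v v := by rw [smul_smul, invOf_mul_self, one_smul]
    _ = 0 := by rw [h2, smul_zero]

end LinearMap

/-- The skew-symmetric bilinear bracket on the 4-dimensional real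
vector space `𝔤` with basis `X₁, X₂, X₃, X₄` determined by
`[X₁,X₂] = −[X₃,X₄] = λ₁X₁ + λ₂X₂ + λ₃X₃ + λ₄X₄`,
`[X₁,X₃] = [X₂,X₄] = λ₄X₁ − λ₃X₂ + λ₂X₃ − λ₁X₄`, `[X₂,X₃] = [X₁,X₄] = 0`
satisfies the Jacobi identity. -/
theorem statement_8 {G : Type*} [AddCommGroup G] [Module ℝ G]
    (X : Module.Basis (Fin 4) ℝ G)
    (l1 l2 l3 l4 : ℝ)
    (bracket : G →ₗ[ℝ] G →ₗ[ℝ] G)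
    (hskew : ∀ x y : G, bracket x y = - bracket y x)
    (h12 : bracket (X 0) (X 1) = l1 • X 0 + l2 • X 1 + l3 • X 2 + l4 • X 3)
    (h34 : bracket (X 2) (X 3) = -(l1 • X 0 + l2 • X 1 + l3 • X 2 + l4 • X 3))
    (h13 : bracket (X 0) (X 2) = l4 • X 0 - l3 • X 1 + l2 • X 2 - l1 • X 3)
    (h24 : bracket (X 1) (X 3) = l4 • X 0 - l3 • X 1 + l2 • X 2 - l1 • X 3)
    (h23 : bracket (X 1) (X 2) = 0)
    (h14 : bracket (X 0) (X 3) = 0) :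
    ∀ x y z : G, bracket (bracket x y) z + bracket (bracket y z) x + bracket (bracket z x) y = 0 := by
  have : Invertible (2 : ℝ) := invertibleOfNonzero two_ne_zero
  have hdiag := LinearMap.apply_self_eq_zero_of_skew bracket hskew
  refine LinearMap.jacobiator_eq_zero_of_basis bracket X fun i j k => ?_
  fin_cases i <;> fin_cases j <;> fin_cases k <;>
    simp only [LinearMap.jacobiator, Fin.zero_eta, Fin.mk_one, Fin.reduceFinMk, Fin.isValue,
      hskew (X 1) (X 0), hskew (X 2) (X 0), hskew (X 3) (X 0),
      hskew (X 2) (X 1), hskew (X 3) (X 1), hskew (X 3) (X 2),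
      h12, h13, h14, h23, h24, h34, hdiag, map_add, map_sub, map_neg, map_smul, map_zero,
      LinearMap.add_apply, LinearMap.sub_apply, LinearMap.neg_apply, LinearMap.smul_apply,
      LinearMap.zero_apply] <;>
    module
end

section
/- Let λ₁,λ₂,λ₃,λ₄ ∈ ℝ and let 𝔤 be the 4-dimensional real Lie algebra with orthonormal basis X₁,X₂,X₃,X₄ (inner product g), brackets [X₁,X₂] = −[X₃,X₄] = λ₁X₁ + λ₂X₂ + λ₃X₃ + λ₄X₄, [X₁,X₃] = [X₂,X₄] = λ₄X₁ − λ₃X₂ + λ₂X₃ − λ₁X₄, [X₂,X₃] = [X₁,X₄] = 0, and P the linear map with PX₁ = X₃, PX₂ = X₄, PX₃ = X₁, PX₄ = X₂. Define ∇ by the Koszul formula 2g(∇ₓy,z) = g([x,y],z) + g([z,x],y) + g([z,y],x), F(x,y,z) = g(∇ₓ(Py) − P(∇ₓy), z), and θ(z) = Σᵢ F(Xᵢ,Xᵢ,z). Then θ(X₁) = 4λ₄, θ(X₂) = −4λ₃, θ(X₃) = −4λ₂, θ(X₄) = 4λ₁. -/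
set_option maxHeartbeats 2000000


open scoped RealInnerProductSpace

/-- In the example Lie algebra `(𝔤, g, P)` of the paper, the Lee form
`θ(z) = Σᵢ F(Xᵢ,Xᵢ,z)` of `F(x,y,z) = g(∇ₓ(Py) − P(∇ₓy), z)` has components
`θ(X₁) = 4λ₄`, `θ(X₂) = −4λ₃`, `θ(X₃) = −4λ₂`, `θ(X₄) = 4λ₁`. -/
theorem statement_10
    (l1 l2 l3 l4 : ℝ)
    (X : Fin 4 → EuclideanSpace ℝ (Fin 4))
    (hX : ∀ i, X i = EuclideanSpace.single i 1)
    (bracket : EuclideanSpace ℝ (Fin 4) →ₗ[ℝ] EuclideanSpace ℝ (Fin 4) →ₗ[ℝ] EuclideanSpace ℝ (Fin 4))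
    (hskew : ∀ x y, bracket x y = - bracket y x)
    (hjacobi : ∀ x y z,
      bracket (bracket x y) z + bracket (bracket y z) x + bracket (bracket z x) y = 0)
    (h12 : bracket (X 0) (X 1) = l1 • X 0 + l2 • X 1 + l3 • X 2 + l4 • X 3)
    (h34 : bracket (X 2) (X 3) = -(l1 • X 0 + l2 • X 1 + l3 • X 2 + l4 • X 3))
    (h13 : bracket (X 0) (X 2) = l4 • X 0 - l3 • X 1 + l2 • X 2 - l1 • X 3)
    (h24 : bracket (X 1) (X 3) = l4 • X 0 - l3 • X 1 + l2 • X 2 - l1 • X 3)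
    (h23 : bracket (X 1) (X 2) = 0)
    (h14 : bracket (X 0) (X 3) = 0)
    (nabla : EuclideanSpace ℝ (Fin 4) → EuclideanSpace ℝ (Fin 4) → EuclideanSpace ℝ (Fin 4))
    (hKoszul : ∀ x y z, 2 * ⟪nabla x y, z⟫
      = ⟪bracket x y, z⟫ + ⟪bracket z x, y⟫ + ⟪bracket z y, x⟫)
    (P : EuclideanSpace ℝ (Fin 4) →ₗ[ℝ] EuclideanSpace ℝ (Fin 4))
    (hP1 : P (X 0) = X 2) (hP2 : P (X 1) = X 3) (hP3 : P (X 2) = X 0) (hP4 : P (X 3) = X 1)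
    (F : EuclideanSpace ℝ (Fin 4) → EuclideanSpace ℝ (Fin 4) → EuclideanSpace ℝ (Fin 4) → ℝ)
    (hF : ∀ x y z, F x y z = ⟪nabla x (P y) - P (nabla x y), z⟫)
    (θ : EuclideanSpace ℝ (Fin 4) → ℝ)
    (hθ : ∀ z, θ z = ∑ i, F (X i) (X i) z) :
    θ (X 0) = 4 * l4 ∧ θ (X 1) = -4 * l3 ∧ θ (X 2) = -4 * l2 ∧ θ (X 3) = 4 * l1 := by
  have h21 : bracket (X 1) (X 0) = -(l1 • X 0 + l2 • X 1 + l3 • X 2 + l4 • X 3) := by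
    rw [hskew, h12]
  have h43 : bracket (X 3) (X 2) = l1 • X 0 + l2 • X 1 + l3 • X 2 + l4 • X 3 := by
    rw [hskew, h34, neg_neg]
  have h31 : bracket (X 2) (X 0) = -(l4 • X 0 - l3 • X 1 + l2 • X 2 - l1 • X 3) := by
    rw [hskew, h13]
  have h42 : bracket (X 3) (X 1) = -(l4 • X 0 - l3 • X 1 + l2 • X 2 - l1 • X 3) := by
    rw [hskew, h24]
  have h32 : bracket (X 2) (X 1) = 0 := by rw [hskew, h23, neg_zero]
  have h41 : bracket (X 3) (X 0) = 0 := by rw [hskew, h14, neg_zero]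
  have hd : ∀ i, bracket (X i) (X i) = 0 := by
    intro i
    have h := hskew (X i) (X i)
    have h2 : (2 : ℝ) • bracket (X i) (X i) = 0 := by
      rw [two_smul]; nth_rewrite 2 [h]; simp
    simpa using (smul_eq_zero.mp h2).resolve_left (by norm_num)
  have hN : ∀ x y (k : Fin 4), ⟪nabla x y, X k⟫
      = (⟪bracket x y, X k⟫ + ⟪bracket (X k) x, y⟫ + ⟪bracket (X k) y, x⟫) / 2 := by
    intro x y k
    have := hKoszul x y (X k)
    linarith
  have hexp : ∀ v : EuclideanSpace ℝ (Fin 4),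
      v = v 0 • X 0 + v 1 • X 1 + v 2 • X 2 + v 3 • X 3 := by
    intro v
    simp only [hX]
    ext j
    fin_cases j <;>
      simp [EuclideanSpace.single_apply]
  have hPadj : ∀ (v : EuclideanSpace ℝ (Fin 4)) (j : Fin 4),
      ⟪P v, X j⟫ = ⟪v, P (X j)⟫ := by
    intro v j
    conv_lhs => rw [hexp v]
    rw [map_add, map_add, map_add, map_smul, map_smul, map_smul, map_smul,
      hP1, hP2, hP3, hP4]
    fin_cases j
    · rw [show (⟨0, by norm_num⟩ : Fin 4) = 0 from rfl, hP1]
      simp [hX, inner_add_left, real_inner_smul_left,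
        EuclideanSpace.inner_single_left, EuclideanSpace.inner_single_right,
        EuclideanSpace.single_apply]
    · rw [show (⟨1, by norm_num⟩ : Fin 4) = 1 from rfl, hP2]
      simp [hX, inner_add_left, real_inner_smul_left,
        EuclideanSpace.inner_single_left, EuclideanSpace.inner_single_right,
        EuclideanSpace.single_apply]
    · rw [show (⟨2, by norm_num⟩ : Fin 4) = 2 from rfl, hP3]
      simp [hX, inner_add_left, real_inner_smul_left,
        EuclideanSpace.inner_single_left, EuclideanSpace.inner_single_right,
        EuclideanSpace.single_apply]
    · rw [show (⟨3, by norm_num⟩ : Fin 4) = 3 from rfl, hP4]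
      simp [hX, inner_add_left, real_inner_smul_left,
        EuclideanSpace.inner_single_left, EuclideanSpace.inner_single_right,
        EuclideanSpace.single_apply]
  have key : ∀ (i j : Fin 4), F (X i) (X i) (X j)
      = ⟪nabla (X i) (P (X i)), X j⟫ - ⟪nabla (X i) (X i), P (X j)⟫ := by
    intro i j
    rw [hF, inner_sub_left, hPadj]
  refine ⟨?_, ?_, ?_, ?_⟩ <;>
  · rw [hθ, Fin.sum_univ_four]
    simp only [key, hP1, hP2, hP3, hP4, hN]
    simp only [h12, h34, h13, h24, h23, h14, h21, h43, h31, h42, h32, h41, hd]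
    simp [hX, inner_add_left, inner_sub_left, inner_neg_left, real_inner_smul_left,
      EuclideanSpace.inner_single_left, EuclideanSpace.single_apply]
    ring
end

section
/- Let λ₁,λ₂,λ₃,λ₄ ∈ ℝ and let 𝔤 be the 4-dimensional real Lie algebra with orthonormal basis X₁,X₂,X₃,X₄ (inner product g) and brackets [X₁,X₂] = −[X₃,X₄] = λ₁X₁ + λ₂X₂ + λ₃X₃ + λ₄X₄, [X₁,X₃] = [X₂,X₄] = λ₄X₁ − λ₃X₂ + λ₂X₃ − λ₁X₄, [X₂,X₃] = [X₁,X₄] = 0. Define ∇ by 2g(∇ₓy,z) = g([x,y],z) + g([z,x],y) + g([z,y],x), R(x,y,z,w) = g(∇ₓ∇_y z − ∇_y∇ₓ z − ∇_{[x,y]} z, w), and the sectional curvatures k_{ij} = R(Xᵢ,Xⱼ,Xⱼ,Xᵢ). Then the two P-invariant basis 2-planes have equal sectional curvature, k₁₃ = k₂₄, if and only if λ₁² − λ₂² + λ₃² − λ₄² = 0. -/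
/-!
Koszul's formula gives `∇_{X₃} X₃ = λ₂ X₁ + λ₃ X₄` and `∇_{X₁} X₃ = λ₄ X₁ − λ₃ X₂`, from which
`k₁₃ = −(λ₂² + λ₄²)`. The relabelling `X₁ ↔ X₂`, `X₃ ↔ X₄` preserves the bracket relations once
`(λ₁, λ₂, λ₃, λ₄)` is replaced by `(−λ₂, −λ₁, −λ₄, −λ₃)`, so the same computation gives
`k₂₄ = −(λ₁² + λ₃²)`.
-/

open scoped RealInnerProductSpace

lemma bracket_self_eq_zero {M : Type*} [AddCommGroup M] [Module ℝ M] {B : M → M → M}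
    (hskew : ∀ x y, B x y = -B y x) (x : M) : B x x = 0 := by
  have h : (2 : ℝ) • B x x = 0 := by
    rw [two_smul]
    nth_rewrite 1 [hskew x x]
    exact neg_add_cancel _
  exact (smul_eq_zero.mp h).resolve_left two_ne_zero

variable {E : Type*} [NormedAddCommGroup E] [InnerProductSpace ℝ E]

def curvature (B : E →ₗ[ℝ] E →ₗ[ℝ] E) (nabla : E → E → E) (x y z : E) : E :=
  nabla x (nabla y z) - nabla y (nabla x z) - nabla (B x y) z

section Koszul

variable {B : E →ₗ[ℝ] E →ₗ[ℝ] E} {nabla : E → E → E}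

lemma inner_nabla_eq
    (hK : ∀ x y z, 2 * ⟪nabla x y, z⟫ = ⟪B x y, z⟫ + ⟪B z x, y⟫ + ⟪B z y, x⟫) (x y z : E) :
    ⟪nabla x y, z⟫ = (⟪B x y, z⟫ + ⟪B z x, y⟫ + ⟪B z y, x⟫) / 2 := by
  linarith [hK x y z]

lemma inner_curvature_zero_two_two_zero (b : OrthonormalBasis (Fin 4) ℝ E) (l1 l2 l3 l4 : ℝ)
    (hskew : ∀ x y, B x y = -B y x)
    (hK : ∀ x y z, 2 * ⟪nabla x y, z⟫ = ⟪B x y, z⟫ + ⟪B z x, y⟫ + ⟪B z y, x⟫)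
    (h01 : B (b 0) (b 1) = l1 • b 0 + l2 • b 1 + l3 • b 2 + l4 • b 3)
    (h23 : B (b 2) (b 3) = -(l1 • b 0 + l2 • b 1 + l3 • b 2 + l4 • b 3))
    (h02 : B (b 0) (b 2) = l4 • b 0 - l3 • b 1 + l2 • b 2 - l1 • b 3)
    (h12 : B (b 1) (b 2) = 0) (h03 : B (b 0) (b 3) = 0) :
    ⟪curvature B nabla (b 0) (b 2) (b 2), b 0⟫ = -(l2 ^ 2 + l4 ^ 2) := by
  have h10 : B (b 1) (b 0) = -(l1 • b 0 + l2 • b 1 + l3 • b 2 + l4 • b 3) := by rw [hskew, h01]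
  have h32 : B (b 3) (b 2) = l1 • b 0 + l2 • b 1 + l3 • b 2 + l4 • b 3 := by
    rw [hskew, h23, neg_neg]
  have h20 : B (b 2) (b 0) = -(l4 • b 0 - l3 • b 1 + l2 • b 2 - l1 • b 3) := by rw [hskew, h02]
  have h21 : B (b 2) (b 1) = 0 := by rw [hskew, h12, neg_zero]
  have h30 : B (b 3) (b 0) = 0 := by rw [hskew, h03, neg_zero]
  have hself := bracket_self_eq_zero hskew
  have hΓ := inner_nabla_eq hK
  clear hskew hK
  have hΓ22 : nabla (b 2) (b 2) = l2 • b 0 + l3 • b 3 := by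
    rw [← b.sum_repr' (nabla _ _)]
    simp [*, real_inner_comm (nabla _ _), Fin.sum_univ_four, inner_add_left, inner_sub_left,
      real_inner_smul_left, b.inner_eq_ite]
  have hΓ02 : nabla (b 0) (b 2) = l4 • b 0 - l3 • b 1 := by
    rw [← b.sum_repr' (nabla _ _)]
    simp [*, real_inner_comm (nabla _ _), Fin.sum_univ_four, inner_add_left, inner_sub_left,
      real_inner_smul_left, b.inner_eq_ite]
    module
  simp [curvature, *, inner_add_left, inner_sub_left, inner_add_right, inner_sub_right,
    real_inner_smul_left, real_inner_smul_right, b.inner_eq_ite, -inner_self_eq_norm_sq_to_K]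
  ring

end Koszul

theorem statement_12_general
    (l1 l2 l3 l4 : ℝ)
    (X : Fin 4 → EuclideanSpace ℝ (Fin 4))
    (hX : ∀ i, X i = EuclideanSpace.single i 1)
    (bracket : EuclideanSpace ℝ (Fin 4) →ₗ[ℝ] EuclideanSpace ℝ (Fin 4) →ₗ[ℝ] EuclideanSpace ℝ (Fin 4))
    (hskew : ∀ x y, bracket x y = - bracket y x)
    (h12 : bracket (X 0) (X 1) = l1 • X 0 + l2 • X 1 + l3 • X 2 + l4 • X 3)
    (h34 : bracket (X 2) (X 3) = -(l1 • X 0 + l2 • X 1 + l3 • X 2 + l4 • X 3))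
    (h13 : bracket (X 0) (X 2) = l4 • X 0 - l3 • X 1 + l2 • X 2 - l1 • X 3)
    (h24 : bracket (X 1) (X 3) = l4 • X 0 - l3 • X 1 + l2 • X 2 - l1 • X 3)
    (h23 : bracket (X 1) (X 2) = 0)
    (h14 : bracket (X 0) (X 3) = 0)
    (nabla : EuclideanSpace ℝ (Fin 4) → EuclideanSpace ℝ (Fin 4) → EuclideanSpace ℝ (Fin 4))
    (hKoszul : ∀ x y z, 2 * ⟪nabla x y, z⟫
      = ⟪bracket x y, z⟫ + ⟪bracket z x, y⟫ + ⟪bracket z y, x⟫)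
    (R : EuclideanSpace ℝ (Fin 4) → EuclideanSpace ℝ (Fin 4) → EuclideanSpace ℝ (Fin 4) → EuclideanSpace ℝ (Fin 4) → ℝ)
    (hR : ∀ x y z w,
      R x y z w = ⟪nabla x (nabla y z) - nabla y (nabla x z) - nabla (bracket x y) z, w⟫) :
    R (X 0) (X 2) (X 2) (X 0) = R (X 1) (X 3) (X 3) (X 1)
      ↔ l1 ^ 2 - l2 ^ 2 + l3 ^ 2 - l4 ^ 2 = 0 := by
  set e := EuclideanSpace.basisFun (Fin 4) ℝ
  obtain rfl : X = e := funext fun i => (hX i).trans (EuclideanSpace.basisFun_apply _ _ i).symm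
  have hk13 : R (e 0) (e 2) (e 2) (e 0) = -(l2 ^ 2 + l4 ^ 2) := by
    rw [hR]
    exact inner_curvature_zero_two_two_zero e l1 l2 l3 l4 hskew hKoszul h12 h34 h13 h23 h14
  have hk24 : R (e 1) (e 3) (e 3) (e 1) = -(l1 ^ 2 + l3 ^ 2) := by
    let σ : Equiv.Perm (Fin 4) := Equiv.swap 0 1 * Equiv.swap 2 3
    have hσ : σ.symm 0 = 1 ∧ σ.symm 1 = 0 ∧ σ.symm 2 = 3 ∧ σ.symm 3 = 2 := by decide
    have h := inner_curvature_zero_two_two_zero (e.reindex σ) (-l2) (-l1) (-l4) (-l3) hskew hKoszul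
    simp only [OrthonormalBasis.reindex_apply, hσ] at h
    rw [hR, ← curvature, h (by rw [hskew, h12]; module) (by rw [hskew, h34]; module)
      (by rw [h24]; module) h14 h23]
    ring
  rw [hk13, hk24]
  constructor <;> intro h <;> linarith

/-- In the example Lie algebra of the paper, the two `P`-invariant
basis 2-planes have equal sectional curvature, `k₁₃ = k₂₄`, iff
`λ₁² − λ₂² + λ₃² − λ₄² = 0`. -/
theorem statement_12
    (l1 l2 l3 l4 : ℝ)
    (X : Fin 4 → EuclideanSpace ℝ (Fin 4))
    (hX : ∀ i, X i = EuclideanSpace.single i 1)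
    (bracket : EuclideanSpace ℝ (Fin 4) →ₗ[ℝ] EuclideanSpace ℝ (Fin 4) →ₗ[ℝ] EuclideanSpace ℝ (Fin 4))
    (hskew : ∀ x y, bracket x y = - bracket y x)
    (hjacobi : ∀ x y z,
      bracket (bracket x y) z + bracket (bracket y z) x + bracket (bracket z x) y = 0)
    (h12 : bracket (X 0) (X 1) = l1 • X 0 + l2 • X 1 + l3 • X 2 + l4 • X 3)
    (h34 : bracket (X 2) (X 3) = -(l1 • X 0 + l2 • X 1 + l3 • X 2 + l4 • X 3))
    (h13 : bracket (X 0) (X 2) = l4 • X 0 - l3 • X 1 + l2 • X 2 - l1 • X 3)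
    (h24 : bracket (X 1) (X 3) = l4 • X 0 - l3 • X 1 + l2 • X 2 - l1 • X 3)
    (h23 : bracket (X 1) (X 2) = 0)
    (h14 : bracket (X 0) (X 3) = 0)
    (nabla : EuclideanSpace ℝ (Fin 4) → EuclideanSpace ℝ (Fin 4) → EuclideanSpace ℝ (Fin 4))
    (hKoszul : ∀ x y z, 2 * ⟪nabla x y, z⟫
      = ⟪bracket x y, z⟫ + ⟪bracket z x, y⟫ + ⟪bracket z y, x⟫)
    (R : EuclideanSpace ℝ (Fin 4) → EuclideanSpace ℝ (Fin 4) → EuclideanSpace ℝ (Fin 4) → EuclideanSpace ℝ (Fin 4) → ℝ)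
    (hR : ∀ x y z w,
      R x y z w = ⟪nabla x (nabla y z) - nabla y (nabla x z) - nabla (bracket x y) z, w⟫) :
    R (X 0) (X 2) (X 2) (X 0) = R (X 1) (X 3) (X 3) (X 1)
      ↔ l1 ^ 2 - l2 ^ 2 + l3 ^ 2 - l4 ^ 2 = 0 :=
  statement_12_general l1 l2 l3 l4 X hX bracket hskew h12 h34 h13 h24 h23 h14 nabla hKoszul R hR
end

section
/- Let λ₁,λ₂,λ₃,λ₄ ∈ ℝ and let 𝔤 be the 4-dimensional real Lie algebra with orthonormal basis X₁,X₂,X₃,X₄ (inner product g) and brackets [X₁,X₂] = −[X₃,X₄] = λ₁X₁ + λ₂X₂ + λ₃X₃ + λ₄X₄, [X₁,X₃] = [X₂,X₄] = λ₄X₁ − λ₃X₂ + λ₂X₃ − λ₁X₄, [X₂,X₃] = [X₁,X₄] = 0. Define ∇ by 2g(∇ₓy,z) = g([x,y],z) + g([z,x],y) + g([z,y],x), R(x,y,z,w) = g(∇ₓ∇_y z − ∇_y∇ₓ z − ∇_{[x,y]} z, w), and k_{ij} = R(Xᵢ,Xⱼ,Xⱼ,Xᵢ). Then the four P-anti-invariant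 basis 2-planes have equal sectional curvature, k₁₂ = k₁₄ = k₂₃ = k₃₄, if and only if λ₁² = λ₃² and λ₂² = λ₄². -/
open scoped RealInnerProductSpace

set_option maxHeartbeats 2000000 in
/-- In the example Lie algebra of the paper, the four
`P`-anti-invariant basis 2-planes have equal sectional curvature,
`k₁₂ = k₁₄ = k₂₃ = k₃₄`, iff `λ₁² = λ₃²` and `λ₂² = λ₄²`. -/
theorem statement_13
    (l1 l2 l3 l4 : ℝ)
    (X : Fin 4 → EuclideanSpace ℝ (Fin 4))
    (hX : ∀ i, X i = EuclideanSpace.single i 1)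
    (bracket : EuclideanSpace ℝ (Fin 4) →ₗ[ℝ] EuclideanSpace ℝ (Fin 4) →ₗ[ℝ] EuclideanSpace ℝ (Fin 4))
    (hskew : ∀ x y, bracket x y = - bracket y x)
    (hjacobi : ∀ x y z,
      bracket (bracket x y) z + bracket (bracket y z) x + bracket (bracket z x) y = 0)
    (h12 : bracket (X 0) (X 1) = l1 • X 0 + l2 • X 1 + l3 • X 2 + l4 • X 3)
    (h34 : bracket (X 2) (X 3) = -(l1 • X 0 + l2 • X 1 + l3 • X 2 + l4 • X 3))
    (h13 : bracket (X 0) (X 2) = l4 • X 0 - l3 • X 1 + l2 • X 2 - l1 • X 3)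
    (h24 : bracket (X 1) (X 3) = l4 • X 0 - l3 • X 1 + l2 • X 2 - l1 • X 3)
    (h23 : bracket (X 1) (X 2) = 0)
    (h14 : bracket (X 0) (X 3) = 0)
    (nabla : EuclideanSpace ℝ (Fin 4) → EuclideanSpace ℝ (Fin 4) → EuclideanSpace ℝ (Fin 4))
    (hKoszul : ∀ x y z, 2 * ⟪nabla x y, z⟫
      = ⟪bracket x y, z⟫ + ⟪bracket z x, y⟫ + ⟪bracket z y, x⟫)
    (R : EuclideanSpace ℝ (Fin 4) → EuclideanSpace ℝ (Fin 4) → EuclideanSpace ℝ (Fin 4) → EuclideanSpace ℝ (Fin 4) → ℝ)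
    (hR : ∀ x y z w,
      R x y z w = ⟪nabla x (nabla y z) - nabla y (nabla x z) - nabla (bracket x y) z, w⟫) :
    (R (X 0) (X 1) (X 1) (X 0) = R (X 0) (X 3) (X 3) (X 0) ∧
     R (X 0) (X 3) (X 3) (X 0) = R (X 1) (X 2) (X 2) (X 1) ∧
     R (X 1) (X 2) (X 2) (X 1) = R (X 2) (X 3) (X 3) (X 2))
      ↔ (l1 ^ 2 = l3 ^ 2 ∧ l2 ^ 2 = l4 ^ 2) := by
  
  have hd : ∀ i, bracket (X i) (X i) = 0 := by
    intro i
    have h := hskew (X i) (X i)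
    have h2 : (2:ℝ) • bracket (X i) (X i) = 0 := by
      rw [two_smul]; nth_rewrite 2 [h]; simp
    simpa using h2
  have h21 : bracket (X 1) (X 0) = -(l1 • X 0 + l2 • X 1 + l3 • X 2 + l4 • X 3) := by
    rw [hskew, h12]
  have h43 : bracket (X 3) (X 2) = l1 • X 0 + l2 • X 1 + l3 • X 2 + l4 • X 3 := by
    rw [hskew, h34]; simp
  have h31 : bracket (X 2) (X 0) = -(l4 • X 0 - l3 • X 1 + l2 • X 2 - l1 • X 3) := by
    rw [hskew, h13]
  have h42 : bracket (X 3) (X 1) = -(l4 • X 0 - l3 • X 1 + l2 • X 2 - l1 • X 3) := by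
    rw [hskew, h24]
  have h32 : bracket (X 2) (X 1) = 0 := by rw [hskew, h23]; simp
  have h41 : bracket (X 3) (X 0) = 0 := by rw [hskew, h14]; simp
  have hXX : ∀ i j : Fin 4, ⟪X i, X j⟫ = if i = j then (1:ℝ) else 0 := by
    intro i j
    rw [hX, hX]
    rw [show (1:ℝ) = ((1:ℝ):ℝ) from rfl, EuclideanSpace.inner_single_left]
    simp [EuclideanSpace.single_apply, eq_comm]
  have hK : ∀ x y z, ⟪nabla x y, z⟫
      = (⟪bracket x y, z⟫ + ⟪bracket z x, y⟫ + ⟪bracket z y, x⟫) / 2 := by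
    intro x y z; linarith [hKoszul x y z]
  have hcoord : ∀ (v : EuclideanSpace ℝ (Fin 4)) (i : Fin 4), v i = ⟪v, X i⟫ := by
    intro v i
    rw [hX, show (1:ℝ) = ((1:ℝ):ℝ) from rfl, EuclideanSpace.inner_single_right]
    simp
  have hnab : ∀ x y : EuclideanSpace ℝ (Fin 4), ∀ w : EuclideanSpace ℝ (Fin 4),
      ((⟪bracket x y, X 0⟫ + ⟪bracket (X 0) x, y⟫ + ⟪bracket (X 0) y, x⟫) / 2 = ⟪w, X 0⟫) →
      ((⟪bracket x y, X 1⟫ + ⟪bracket (X 1) x, y⟫ + ⟪bracket (X 1) y, x⟫) / 2 = ⟪w, X 1⟫) →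
      ((⟪bracket x y, X 2⟫ + ⟪bracket (X 2) x, y⟫ + ⟪bracket (X 2) y, x⟫) / 2 = ⟪w, X 2⟫) →
      ((⟪bracket x y, X 3⟫ + ⟪bracket (X 3) x, y⟫ + ⟪bracket (X 3) y, x⟫) / 2 = ⟪w, X 3⟫) →
      nabla x y = w := by
    intro x y w h0 h1 h2 h3
    ext k
    rw [hcoord (nabla x y) k, hcoord w k, hK]
    fin_cases k
    · exact h0
    · exact h1
    · exact h2
    · exact h3
  have n11 : nabla (X 1) (X 1) = l2 • X 0 + l3 • X 3 := by
    apply hnab <;>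
      simp only [h12, h34, h13, h24, h23, h14, h21, h43, h31, h42, h32, h41, hd,
        map_add, map_sub, map_smul, map_neg, map_zero, LinearMap.add_apply,
        LinearMap.sub_apply, LinearMap.smul_apply, LinearMap.neg_apply, LinearMap.zero_apply,
        inner_add_left, inner_sub_left, inner_neg_left, real_inner_smul_left,
        inner_add_right, inner_sub_right, inner_neg_right, real_inner_smul_right,
        inner_zero_left, inner_zero_right, smul_add, smul_sub, smul_neg, smul_smul,
        smul_zero, hXX, Fin.isValue] <;>
      norm_num [Fin.ext_iff, show ((3:Fin 4):ℕ) = 3 from rfl, show ((2:Fin 4):ℕ) = 2 from rfl,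
        show ((1:Fin 4):ℕ) = 1 from rfl, show ((0:Fin 4):ℕ) = 0 from rfl] <;> ring
  have n01 : nabla (X 0) (X 1) = l1 • X 0 + l3 • X 2 := by
    apply hnab <;>
      simp only [h12, h34, h13, h24, h23, h14, h21, h43, h31, h42, h32, h41, hd,
        map_add, map_sub, map_smul, map_neg, map_zero, LinearMap.add_apply,
        LinearMap.sub_apply, LinearMap.smul_apply, LinearMap.neg_apply, LinearMap.zero_apply,
        inner_add_left, inner_sub_left, inner_neg_left, real_inner_smul_left,
        inner_add_right, inner_sub_right, inner_neg_right, real_inner_smul_right,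
        inner_zero_left, inner_zero_right, smul_add, smul_sub, smul_neg, smul_smul,
        smul_zero, hXX, Fin.isValue] <;>
      norm_num [Fin.ext_iff, show ((3:Fin 4):ℕ) = 3 from rfl, show ((2:Fin 4):ℕ) = 2 from rfl,
        show ((1:Fin 4):ℕ) = 1 from rfl, show ((0:Fin 4):ℕ) = 0 from rfl] <;> ring
  have n33 : nabla (X 3) (X 3) = (-l1) • X 1 + (-l4) • X 2 := by
    apply hnab <;>
      simp only [h12, h34, h13, h24, h23, h14, h21, h43, h31, h42, h32, h41, hd,
        map_add, map_sub, map_smul, map_neg, map_zero, LinearMap.add_apply,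
        LinearMap.sub_apply, LinearMap.smul_apply, LinearMap.neg_apply, LinearMap.zero_apply,
        inner_add_left, inner_sub_left, inner_neg_left, real_inner_smul_left,
        inner_add_right, inner_sub_right, inner_neg_right, real_inner_smul_right,
        inner_zero_left, inner_zero_right, smul_add, smul_sub, smul_neg, smul_smul,
        smul_zero, hXX, Fin.isValue] <;>
      norm_num [Fin.ext_iff, show ((3:Fin 4):ℕ) = 3 from rfl, show ((2:Fin 4):ℕ) = 2 from rfl,
        show ((1:Fin 4):ℕ) = 1 from rfl, show ((0:Fin 4):ℕ) = 0 from rfl] <;> ring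
  have n03 : nabla (X 0) (X 3) = (0:EuclideanSpace ℝ (Fin 4)) := by
    apply hnab <;>
      simp only [h12, h34, h13, h24, h23, h14, h21, h43, h31, h42, h32, h41, hd,
        map_add, map_sub, map_smul, map_neg, map_zero, LinearMap.add_apply,
        LinearMap.sub_apply, LinearMap.smul_apply, LinearMap.neg_apply, LinearMap.zero_apply,
        inner_add_left, inner_sub_left, inner_neg_left, real_inner_smul_left,
        inner_add_right, inner_sub_right, inner_neg_right, real_inner_smul_right,
        inner_zero_left, inner_zero_right, smul_add, smul_sub, smul_neg, smul_smul,
        smul_zero, hXX, Fin.isValue] <;>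
      norm_num [Fin.ext_iff, show ((3:Fin 4):ℕ) = 3 from rfl, show ((2:Fin 4):ℕ) = 2 from rfl,
        show ((1:Fin 4):ℕ) = 1 from rfl, show ((0:Fin 4):ℕ) = 0 from rfl] <;> ring
  have n22 : nabla (X 2) (X 2) = l2 • X 0 + l3 • X 3 := by
    apply hnab <;>
      simp only [h12, h34, h13, h24, h23, h14, h21, h43, h31, h42, h32, h41, hd,
        map_add, map_sub, map_smul, map_neg, map_zero, LinearMap.add_apply,
        LinearMap.sub_apply, LinearMap.smul_apply, LinearMap.neg_apply, LinearMap.zero_apply,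
        inner_add_left, inner_sub_left, inner_neg_left, real_inner_smul_left,
        inner_add_right, inner_sub_right, inner_neg_right, real_inner_smul_right,
        inner_zero_left, inner_zero_right, smul_add, smul_sub, smul_neg, smul_smul,
        smul_zero, hXX, Fin.isValue] <;>
      norm_num [Fin.ext_iff, show ((3:Fin 4):ℕ) = 3 from rfl, show ((2:Fin 4):ℕ) = 2 from rfl,
        show ((1:Fin 4):ℕ) = 1 from rfl, show ((0:Fin 4):ℕ) = 0 from rfl] <;> ring
  have n12 : nabla (X 1) (X 2) = (0:EuclideanSpace ℝ (Fin 4)) := by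
    apply hnab <;>
      simp only [h12, h34, h13, h24, h23, h14, h21, h43, h31, h42, h32, h41, hd,
        map_add, map_sub, map_smul, map_neg, map_zero, LinearMap.add_apply,
        LinearMap.sub_apply, LinearMap.smul_apply, LinearMap.neg_apply, LinearMap.zero_apply,
        inner_add_left, inner_sub_left, inner_neg_left, real_inner_smul_left,
        inner_add_right, inner_sub_right, inner_neg_right, real_inner_smul_right,
        inner_zero_left, inner_zero_right, smul_add, smul_sub, smul_neg, smul_smul,
        smul_zero, hXX, Fin.isValue] <;>
      norm_num [Fin.ext_iff, show ((3:Fin 4):ℕ) = 3 from rfl, show ((2:Fin 4):ℕ) = 2 from rfl,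
        show ((1:Fin 4):ℕ) = 1 from rfl, show ((0:Fin 4):ℕ) = 0 from rfl] <;> ring
  have n23 : nabla (X 2) (X 3) = (-l1) • X 0 + (-l3) • X 2 := by
    apply hnab <;>
      simp only [h12, h34, h13, h24, h23, h14, h21, h43, h31, h42, h32, h41, hd,
        map_add, map_sub, map_smul, map_neg, map_zero, LinearMap.add_apply,
        LinearMap.sub_apply, LinearMap.smul_apply, LinearMap.neg_apply, LinearMap.zero_apply,
        inner_add_left, inner_sub_left, inner_neg_left, real_inner_smul_left,
        inner_add_right, inner_sub_right, inner_neg_right, real_inner_smul_right,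
        inner_zero_left, inner_zero_right, smul_add, smul_sub, smul_neg, smul_smul,
        smul_zero, hXX, Fin.isValue] <;>
      norm_num [Fin.ext_iff, show ((3:Fin 4):ℕ) = 3 from rfl, show ((2:Fin 4):ℕ) = 2 from rfl,
        show ((1:Fin 4):ℕ) = 1 from rfl, show ((0:Fin 4):ℕ) = 0 from rfl] <;> ring
  have hk12 : R (X 0) (X 1) (X 1) (X 0) = -(l1^2 + l2^2) := by
    rw [hR, n11, n01]
    simp only [inner_sub_left]
    rw [hK, hK, hK]
    simp only [h12, h34, h13, h24, h23, h14, h21, h43, h31, h42, h32, h41, hd,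
        map_add, map_sub, map_smul, map_neg, map_zero, LinearMap.add_apply,
        LinearMap.sub_apply, LinearMap.smul_apply, LinearMap.neg_apply, LinearMap.zero_apply,
        inner_add_left, inner_sub_left, inner_neg_left, real_inner_smul_left,
        inner_add_right, inner_sub_right, inner_neg_right, real_inner_smul_right,
        inner_zero_left, inner_zero_right, smul_add, smul_sub, smul_neg, smul_smul,
        smul_zero, hXX, Fin.isValue] <;>
      norm_num [Fin.ext_iff, show ((3:Fin 4):ℕ) = 3 from rfl, show ((2:Fin 4):ℕ) = 2 from rfl,
        show ((1:Fin 4):ℕ) = 1 from rfl, show ((0:Fin 4):ℕ) = 0 from rfl] <;> ring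
  have hk14 : R (X 0) (X 3) (X 3) (X 0) = -(l1^2 + l4^2) := by
    rw [hR, n33, n03]
    simp only [inner_sub_left]
    rw [hK, hK, hK]
    simp only [h12, h34, h13, h24, h23, h14, h21, h43, h31, h42, h32, h41, hd,
        map_add, map_sub, map_smul, map_neg, map_zero, LinearMap.add_apply,
        LinearMap.sub_apply, LinearMap.smul_apply, LinearMap.neg_apply, LinearMap.zero_apply,
        inner_add_left, inner_sub_left, inner_neg_left, real_inner_smul_left,
        inner_add_right, inner_sub_right, inner_neg_right, real_inner_smul_right,
        inner_zero_left, inner_zero_right, smul_add, smul_sub, smul_neg, smul_smul,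
        smul_zero, hXX, Fin.isValue] <;>
      norm_num [Fin.ext_iff, show ((3:Fin 4):ℕ) = 3 from rfl, show ((2:Fin 4):ℕ) = 2 from rfl,
        show ((1:Fin 4):ℕ) = 1 from rfl, show ((0:Fin 4):ℕ) = 0 from rfl] <;> ring
  have hk23 : R (X 1) (X 2) (X 2) (X 1) = -(l2^2 + l3^2) := by
    rw [hR, n22, n12]
    simp only [inner_sub_left]
    rw [hK, hK, hK]
    simp only [h12, h34, h13, h24, h23, h14, h21, h43, h31, h42, h32, h41, hd,
        map_add, map_sub, map_smul, map_neg, map_zero, LinearMap.add_apply,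
        LinearMap.sub_apply, LinearMap.smul_apply, LinearMap.neg_apply, LinearMap.zero_apply,
        inner_add_left, inner_sub_left, inner_neg_left, real_inner_smul_left,
        inner_add_right, inner_sub_right, inner_neg_right, real_inner_smul_right,
        inner_zero_left, inner_zero_right, smul_add, smul_sub, smul_neg, smul_smul,
        smul_zero, hXX, Fin.isValue] <;>
      norm_num [Fin.ext_iff, show ((3:Fin 4):ℕ) = 3 from rfl, show ((2:Fin 4):ℕ) = 2 from rfl,
        show ((1:Fin 4):ℕ) = 1 from rfl, show ((0:Fin 4):ℕ) = 0 from rfl] <;> ring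
  have hk34 : R (X 2) (X 3) (X 3) (X 2) = -(l3^2 + l4^2) := by
    rw [hR, n33, n23]
    simp only [inner_sub_left]
    rw [hK, hK, hK]
    simp only [h12, h34, h13, h24, h23, h14, h21, h43, h31, h42, h32, h41, hd,
        map_add, map_sub, map_smul, map_neg, map_zero, LinearMap.add_apply,
        LinearMap.sub_apply, LinearMap.smul_apply, LinearMap.neg_apply, LinearMap.zero_apply,
        inner_add_left, inner_sub_left, inner_neg_left, real_inner_smul_left,
        inner_add_right, inner_sub_right, inner_neg_right, real_inner_smul_right,
        inner_zero_left, inner_zero_right, smul_add, smul_sub, smul_neg, smul_smul,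
        smul_zero, hXX, Fin.isValue] <;>
      norm_num [Fin.ext_iff, show ((3:Fin 4):ℕ) = 3 from rfl, show ((2:Fin 4):ℕ) = 2 from rfl,
        show ((1:Fin 4):ℕ) = 1 from rfl, show ((0:Fin 4):ℕ) = 0 from rfl] <;> ring
  rw [hk12, hk14, hk23, hk34]
  constructor
  · rintro ⟨e1, e2, e3⟩
    constructor <;> nlinarith [e1, e2, e3]
  · rintro ⟨e1, e2⟩
    refine ⟨by nlinarith, by nlinarith, by nlinarith⟩
end

section
/- Let λ₁,λ₂,λ₃,λ₄ ∈ ℝ and let 𝔤 be the 4-dimensional real Lie algebra with orthonormal basis X₁,X₂,X₃,X₄ (inner product g) and brackets [X₁,X₂] = −[X₃,X₄] = λ₁X₁ + λ₂X₂ + λ₃X₃ + λ₄X₄, [X₁,X₃] = [X₂,X₄] = λ₄X₁ − λ₃X₂ + λ₂X₃ − λ₁X₄, [X₂,X₃] = [X₁,X₄] = 0. Define ∇ by 2g(∇ₓy,z) = g([x,y],z) + g([z,x],y) + g([z,y],x), R(x,y,z,w) = g(∇ₓ∇_y z − ∇_y∇ₓ z − ∇_{[x,y]} z, w), and k_{ij}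 = R(Xᵢ,Xⱼ,Xⱼ,Xᵢ). Then all six basis sectional curvatures k₁₂, k₁₃, k₁₄, k₂₃, k₂₄, k₃₄ are equal if and only if λ₁² = λ₂² = λ₃² = λ₄². -/
/-!
For a left-invariant metric everything is algebraic in the structure constants
`c i j k = ⟪[Xᵢ, Xⱼ], Xₖ⟫`: the Koszul formula forces `∇` to be bilinear, with Christoffel
symbols `Γ i j k = (c i j k + c k i j + c k j i) / 2` on an orthonormal basis, and then
`R(Xᵢ, Xⱼ, Xₗ, Xₘ) = ∑ₖ (Γ j l k Γ i k m - Γ i l k Γ j k m - c i j k Γ k l m)`.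
For the example algebra this gives `k_{ij} = -(λ_a² + λ_b²)` for suitable pairs `{a, b}`
(e.g. `k₁₂ = -(λ₁² + λ₂²)`, `k₁₃ = -(λ₂² + λ₄²)`), and equality of the six sums is equality
of the four squares.
-/

open scoped RealInnerProductSpace
open Finset

noncomputable def christoffel {ι : Type*} (c : ι → ι → ι → ℝ) (i j k : ι) : ℝ :=
  (c i j k + c k i j + c k j i) / 2

noncomputable def curvatureOfStructConst {ι : Type*} [Fintype ι] (c : ι → ι → ι → ℝ)
    (i j l m : ι) : ℝ :=
  ∑ k, (christoffel c j l k * christoffel c i k m - christoffel c i l k * christoffel c j k m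
    - c i j k * christoffel c k l m)

section LeviCivita

variable {E : Type*} [NormedAddCommGroup E] [InnerProductSpace ℝ E]

def IsLeviCivita (bracket : E →ₗ[ℝ] E →ₗ[ℝ] E) (nabla : E → E → E) : Prop :=
  ∀ x y z, 2 * ⟪nabla x y, z⟫ = ⟪bracket x y, z⟫ + ⟪bracket z x, y⟫ + ⟪bracket z y, x⟫

def structConst {ι : Type*} (bracket : E →ₗ[ℝ] E →ₗ[ℝ] E) (b : ι → E) (i j k : ι) : ℝ :=
  ⟪bracket (b i) (b j), b k⟫

namespace IsLeviCivita

variable {bracket : E →ₗ[ℝ] E →ₗ[ℝ] E} {nabla : E → E → E}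

theorem inner_eq (h : IsLeviCivita bracket nabla) (x y z : E) :
    ⟪nabla x y, z⟫ = (⟪bracket x y, z⟫ + ⟪bracket z x, y⟫ + ⟪bracket z y, x⟫) / 2 := by
  linarith [h x y z]

theorem add_left (h : IsLeviCivita bracket nabla) (x x' y : E) :
    nabla (x + x') y = nabla x y + nabla x' y :=
  ext_inner_right ℝ fun z => by
    simp only [inner_add_left, h.inner_eq, map_add, LinearMap.add_apply, inner_add_right]
    ring

theorem smul_left (h : IsLeviCivita bracket nabla) (a : ℝ) (x y : E) :
    nabla (a • x) y = a • nabla x y :=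
  ext_inner_right ℝ fun z => by
    simp only [inner_smul_left, h.inner_eq, map_smul, LinearMap.smul_apply, inner_smul_right,
      RCLike.conj_to_real]
    ring

theorem add_right (h : IsLeviCivita bracket nabla) (x y y' : E) :
    nabla x (y + y') = nabla x y + nabla x y' :=
  ext_inner_right ℝ fun z => by
    simp only [inner_add_left, h.inner_eq, map_add, inner_add_right]
    ring

theorem smul_right (h : IsLeviCivita bracket nabla) (a : ℝ) (x y : E) :
    nabla x (a • y) = a • nabla x y :=
  ext_inner_right ℝ fun z => by
    simp only [inner_smul_left, h.inner_eq, map_smul, inner_smul_right, RCLike.conj_to_real]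
    ring

def toLinearMap₂ (h : IsLeviCivita bracket nabla) : E →ₗ[ℝ] E →ₗ[ℝ] E :=
  LinearMap.mk₂ ℝ nabla h.add_left h.smul_left h.add_right h.smul_right

theorem sum_smul_left (h : IsLeviCivita bracket nabla) {ι : Type*} (s : Finset ι) (a : ι → ℝ)
    (v : ι → E) (y : E) : nabla (∑ k ∈ s, a k • v k) y = ∑ k ∈ s, a k • nabla (v k) y := by
  change h.toLinearMap₂ _ y = ∑ k ∈ s, a k • h.toLinearMap₂ (v k) y
  simp only [map_sum, map_smul, LinearMap.sum_apply, LinearMap.smul_apply]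

theorem sum_smul_right (h : IsLeviCivita bracket nabla) {ι : Type*} (s : Finset ι) (a : ι → ℝ)
    (x : E) (v : ι → E) : nabla x (∑ k ∈ s, a k • v k) = ∑ k ∈ s, a k • nabla x (v k) := by
  change h.toLinearMap₂ x _ = ∑ k ∈ s, a k • h.toLinearMap₂ x (v k)
  simp only [map_sum, map_smul]

theorem inner_basis (h : IsLeviCivita bracket nabla) {ι : Type*} (b : ι → E) (i j k : ι) :
    ⟪nabla (b i) (b j), b k⟫ = christoffel (structConst bracket b) i j k :=
  h.inner_eq _ _ _

theorem curvature_basis (h : IsLeviCivita bracket nabla) {ι : Type*} [Fintype ι]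
    (b : OrthonormalBasis ι ℝ E) (i j l m : ι) :
    ⟪nabla (b i) (nabla (b j) (b l)) - nabla (b j) (nabla (b i) (b l))
      - nabla (bracket (b i) (b j)) (b l), b m⟫
      = curvatureOfStructConst (structConst bracket b) i j l m := by
  have expand : ∀ v : E, v = ∑ k, ⟪v, b k⟫ • b k := fun v =>
    (b.sum_repr' v).symm.trans (Finset.sum_congr rfl fun k _ => by rw [real_inner_comm])
  rw [expand (nabla (b j) (b l)), expand (nabla (b i) (b l)), expand (bracket (b i) (b j)),
    h.sum_smul_right, h.sum_smul_right, h.sum_smul_left, curvatureOfStructConst]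
  simp only [inner_sub_left, sum_inner, inner_smul_left, RCLike.conj_to_real, h.inner_basis,
    ← Finset.sum_sub_distrib]
  rfl

end IsLeviCivita

end LeviCivita

theorem LinearMap.apply_self_eq_zero_of_skew_s14 {K M : Type*} [Field K] [CharZero K]
    [AddCommGroup M] [Module K M] (f : M →ₗ[K] M →ₗ[K] M) (hf : ∀ x y, f x y = -f y x)
    (x : M) : f x x = 0 := by
  have h : (2 : K) • f x x = 0 := by rw [two_smul]; nth_rewrite 1 [hf]; exact neg_add_cancel _
  exact (smul_eq_zero.mp h).resolve_left two_ne_zero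

/-- `exampleStructConst l1 l2 l3 l4 i j` is the coordinate vector of `[Xᵢ₊₁, Xⱼ₊₁]`
(indices start at `0`): `u = [X₁, X₂]` and `v = [X₁, X₃]`. -/
def exampleStructConst (l1 l2 l3 l4 : ℝ) : Fin 4 → Fin 4 → Fin 4 → ℝ :=
  let u := ![l1, l2, l3, l4]
  let v := ![l4, -l3, l2, -l1]
  ![![0, u, v, 0], ![-u, 0, 0, v], ![-v, 0, 0, -u], ![0, -v, u, 0]]

theorem structConst_eq_exampleStructConst {l1 l2 l3 l4 : ℝ} {X : Fin 4 → EuclideanSpace ℝ (Fin 4)}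
    (hX : ∀ i, X i = EuclideanSpace.single i 1)
    {bracket : EuclideanSpace ℝ (Fin 4) →ₗ[ℝ] EuclideanSpace ℝ (Fin 4) →ₗ[ℝ] EuclideanSpace ℝ (Fin 4)}
    (hskew : ∀ x y, bracket x y = - bracket y x)
    (h12 : bracket (X 0) (X 1) = l1 • X 0 + l2 • X 1 + l3 • X 2 + l4 • X 3)
    (h34 : bracket (X 2) (X 3) = -(l1 • X 0 + l2 • X 1 + l3 • X 2 + l4 • X 3))
    (h13 : bracket (X 0) (X 2) = l4 • X 0 - l3 • X 1 + l2 • X 2 - l1 • X 3)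
    (h24 : bracket (X 1) (X 3) = l4 • X 0 - l3 • X 1 + l2 • X 2 - l1 • X 3)
    (h23 : bracket (X 1) (X 2) = 0)
    (h14 : bracket (X 0) (X 3) = 0) :
    structConst bracket X = exampleStructConst l1 l2 l3 l4 := by
  funext i j k
  fin_cases i <;> fin_cases j <;> fin_cases k <;>
    · simp [structConst, h12, h34, h13, h24, h23, h14, hskew (X 1) (X 0), hskew (X 2) (X 0),
        hskew (X 3) (X 0), hskew (X 2) (X 1), hskew (X 3) (X 1), hskew (X 3) (X 2),
        bracket.apply_self_eq_zero_of_skew_s14 hskew]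
      simp [exampleStructConst, hX, EuclideanSpace.inner_single_right]

theorem exampleStructConst_sectional (l1 l2 l3 l4 : ℝ) :
    curvatureOfStructConst (exampleStructConst l1 l2 l3 l4) 0 1 1 0 = -(l1 ^ 2 + l2 ^ 2) ∧
    curvatureOfStructConst (exampleStructConst l1 l2 l3 l4) 0 2 2 0 = -(l2 ^ 2 + l4 ^ 2) ∧
    curvatureOfStructConst (exampleStructConst l1 l2 l3 l4) 0 3 3 0 = -(l1 ^ 2 + l4 ^ 2) ∧
    curvatureOfStructConst (exampleStructConst l1 l2 l3 l4) 1 2 2 1 = -(l2 ^ 2 + l3 ^ 2) ∧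
    curvatureOfStructConst (exampleStructConst l1 l2 l3 l4) 1 3 3 1 = -(l1 ^ 2 + l3 ^ 2) ∧
    curvatureOfStructConst (exampleStructConst l1 l2 l3 l4) 2 3 3 2 = -(l3 ^ 2 + l4 ^ 2) := by
  refine ⟨?_, ?_, ?_, ?_, ?_, ?_⟩ <;>
    · simp [curvatureOfStructConst, christoffel, exampleStructConst, Fin.sum_univ_four]
      ring

theorem statement_14_general
    (l1 l2 l3 l4 : ℝ)
    (X : Fin 4 → EuclideanSpace ℝ (Fin 4))
    (hX : ∀ i, X i = EuclideanSpace.single i 1)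
    (bracket : EuclideanSpace ℝ (Fin 4) →ₗ[ℝ] EuclideanSpace ℝ (Fin 4) →ₗ[ℝ] EuclideanSpace ℝ (Fin 4))
    (hskew : ∀ x y, bracket x y = - bracket y x)
    (h12 : bracket (X 0) (X 1) = l1 • X 0 + l2 • X 1 + l3 • X 2 + l4 • X 3)
    (h34 : bracket (X 2) (X 3) = -(l1 • X 0 + l2 • X 1 + l3 • X 2 + l4 • X 3))
    (h13 : bracket (X 0) (X 2) = l4 • X 0 - l3 • X 1 + l2 • X 2 - l1 • X 3)
    (h24 : bracket (X 1) (X 3) = l4 • X 0 - l3 • X 1 + l2 • X 2 - l1 • X 3)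
    (h23 : bracket (X 1) (X 2) = 0)
    (h14 : bracket (X 0) (X 3) = 0)
    (nabla : EuclideanSpace ℝ (Fin 4) → EuclideanSpace ℝ (Fin 4) → EuclideanSpace ℝ (Fin 4))
    (hKoszul : ∀ x y z, 2 * ⟪nabla x y, z⟫
      = ⟪bracket x y, z⟫ + ⟪bracket z x, y⟫ + ⟪bracket z y, x⟫)
    (R : EuclideanSpace ℝ (Fin 4) → EuclideanSpace ℝ (Fin 4) → EuclideanSpace ℝ (Fin 4) → EuclideanSpace ℝ (Fin 4) → ℝ)
    (hR : ∀ x y z w,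
      R x y z w = ⟪nabla x (nabla y z) - nabla y (nabla x z) - nabla (bracket x y) z, w⟫) :
    (R (X 0) (X 1) (X 1) (X 0) = R (X 0) (X 2) (X 2) (X 0) ∧
     R (X 0) (X 2) (X 2) (X 0) = R (X 0) (X 3) (X 3) (X 0) ∧
     R (X 0) (X 3) (X 3) (X 0) = R (X 1) (X 2) (X 2) (X 1) ∧
     R (X 1) (X 2) (X 2) (X 1) = R (X 1) (X 3) (X 3) (X 1) ∧
     R (X 1) (X 3) (X 3) (X 1) = R (X 2) (X 3) (X 3) (X 2))
      ↔ (l1 ^ 2 = l2 ^ 2 ∧ l2 ^ 2 = l3 ^ 2 ∧ l3 ^ 2 = l4 ^ 2) := by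
  have hXb : X = ⇑(EuclideanSpace.basisFun (Fin 4) ℝ) :=
    funext fun i => by rw [hX, EuclideanSpace.basisFun_apply]
  have hk : ∀ i j, R (X i) (X j) (X j) (X i)
      = curvatureOfStructConst (exampleStructConst l1 l2 l3 l4) i j j i := fun i j => by
    rw [hR, hXb, IsLeviCivita.curvature_basis hKoszul, ← hXb,
      structConst_eq_exampleStructConst hX hskew h12 h34 h13 h24 h23 h14]
  obtain ⟨k12, k13, k14, k23, k24, k34⟩ := exampleStructConst_sectional l1 l2 l3 l4
  simp only [hk, k12, k13, k14, k23, k24, k34, neg_inj]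
  constructor
  · rintro ⟨e1, e2, e3, e4, e5⟩
    exact ⟨by linarith, by linarith, by linarith⟩
  · rintro ⟨e1, e2, e3⟩
    exact ⟨by linarith, by linarith, by linarith, by linarith, by linarith⟩

/-- In the example Lie algebra of the paper, all six basis sectional
curvatures `k₁₂, k₁₃, k₁₄, k₂₃, k₂₄, k₃₄` are equal iff `λ₁² = λ₂² = λ₃² = λ₄²`. -/
theorem statement_14
    (l1 l2 l3 l4 : ℝ)
    (X : Fin 4 → EuclideanSpace ℝ (Fin 4))
    (hX : ∀ i, X i = EuclideanSpace.single i 1)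
    (bracket : EuclideanSpace ℝ (Fin 4) →ₗ[ℝ] EuclideanSpace ℝ (Fin 4) →ₗ[ℝ] EuclideanSpace ℝ (Fin 4))
    (hskew : ∀ x y, bracket x y = - bracket y x)
    (hjacobi : ∀ x y z,
      bracket (bracket x y) z + bracket (bracket y z) x + bracket (bracket z x) y = 0)
    (h12 : bracket (X 0) (X 1) = l1 • X 0 + l2 • X 1 + l3 • X 2 + l4 • X 3)
    (h34 : bracket (X 2) (X 3) = -(l1 • X 0 + l2 • X 1 + l3 • X 2 + l4 • X 3))
    (h13 : bracket (X 0) (X 2) = l4 • X 0 - l3 • X 1 + l2 • X 2 - l1 • X 3)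
    (h24 : bracket (X 1) (X 3) = l4 • X 0 - l3 • X 1 + l2 • X 2 - l1 • X 3)
    (h23 : bracket (X 1) (X 2) = 0)
    (h14 : bracket (X 0) (X 3) = 0)
    (nabla : EuclideanSpace ℝ (Fin 4) → EuclideanSpace ℝ (Fin 4) → EuclideanSpace ℝ (Fin 4))
    (hKoszul : ∀ x y z, 2 * ⟪nabla x y, z⟫
      = ⟪bracket x y, z⟫ + ⟪bracket z x, y⟫ + ⟪bracket z y, x⟫)
    (R : EuclideanSpace ℝ (Fin 4) → EuclideanSpace ℝ (Fin 4) → EuclideanSpace ℝ (Fin 4) → EuclideanSpace ℝ (Fin 4) → ℝ)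
    (hR : ∀ x y z w,
      R x y z w = ⟪nabla x (nabla y z) - nabla y (nabla x z) - nabla (bracket x y) z, w⟫) :
    (R (X 0) (X 1) (X 1) (X 0) = R (X 0) (X 2) (X 2) (X 0) ∧
     R (X 0) (X 2) (X 2) (X 0) = R (X 0) (X 3) (X 3) (X 0) ∧
     R (X 0) (X 3) (X 3) (X 0) = R (X 1) (X 2) (X 2) (X 1) ∧
     R (X 1) (X 2) (X 2) (X 1) = R (X 1) (X 3) (X 3) (X 1) ∧
     R (X 1) (X 3) (X 3) (X 1) = R (X 2) (X 3) (X 3) (X 2))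
      ↔ (l1 ^ 2 = l2 ^ 2 ∧ l2 ^ 2 = l3 ^ 2 ∧ l3 ^ 2 = l4 ^ 2) :=
  statement_14_general l1 l2 l3 l4 X hX bracket hskew h12 h34 h13 h24 h23 h14 nabla hKoszul R hR
end

section
/- Let λ₁,λ₂,λ₃,λ₄ ∈ ℝ and let 𝔤 be the 4-dimensional real Lie algebra with orthonormal basis X₁,X₂,X₃,X₄ (inner product g), brackets [X₁,X₂] = −[X₃,X₄] = λ₁X₁ + λ₂X₂ + λ₃X₃ + λ₄X₄, [X₁,X₃] = [X₂,X₄] = λ₄X₁ − λ₃X₂ + λ₂X₃ − λ₁X₄, [X₂,X₃] = [X₁,X₄] = 0, and P the linear map with PX₁ = X₃, PX₂ = X₄, PX₃ = X₁, PX₄ = X₂. Define ∇ by 2g(∇ₓy,z) = g([x,y],z) + g([z,x],y) + g([z,y],x), the 1-form θ with θ(X₁) = 4λ₄, θ(X₂) = −4λ₃, θ(X₃) = −4λ₂, θ(X₄) = 4λ₁, the vector Ω with g(Ω,x) = θ(x), and the connection Dₓy = ∇ₓy + (1/4){g(x,y)PΩ − θ(Py)x}. Then the curvature of D vanishes identically: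 DₓD_y z − D_y Dₓ z − D_{[x,y]} z = 0 for all x,y,z ∈ 𝔤. -/
open scoped RealInnerProductSpace

/-!
A direct computation from the Koszul formula shows that the natural connection has the form
`D_x y = α(x) J y`, where `α(x) = λ₃x¹ + λ₄x² − λ₁x³ − λ₂x⁴` and `J` is the linear map
`X₁ ↦ −X₄, X₂ ↦ X₃, X₃ ↦ −X₂, X₄ ↦ X₁`. Hence `D_x D_y z − D_y D_x z = (α(x)α(y) − α(y)α(x)) J²z = 0`,
and `D_{[x,y]} = 0` because the derived algebra, spanned by `[X₁,X₂]` and `[X₁,X₃]`, lies in the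
kernel of `α`.
-/

theorem curvature_eq_zero_of_eq_smul {R M : Type*} [CommRing R] [AddCommGroup M] [Module R M]
    {bracket D : M → M → M} {a : M → R} {J : M → M} (hJ : ∀ (c : R) v, J (c • v) = c • J v)
    (hD : ∀ x y, D x y = a x • J y) (ha : ∀ x y, a (bracket x y) = 0) (x y z : M) :
    D x (D y z) - D y (D x z) - D (bracket x y) z = 0 := by
  simp only [hD, hJ, ha, smul_smul, mul_comm (a x), zero_smul, sub_self]

theorem EuclideanSpace.apply_eq_of_koszul {ι : Type*} [Fintype ι] [DecidableEq ι]
    {bracket nabla : EuclideanSpace ℝ ι → EuclideanSpace ℝ ι → EuclideanSpace ℝ ι}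
    (hKoszul : ∀ x y z, 2 * ⟪nabla x y, z⟫
      = ⟪bracket x y, z⟫ + ⟪bracket z x, y⟫ + ⟪bracket z y, x⟫) (x y : EuclideanSpace ℝ ι) (i : ι) :
    nabla x y i = (bracket x y i + ⟪bracket (single i 1) x, y⟫ + ⟪bracket (single i 1) y, x⟫) / 2 := by
  have h := hKoszul x y (single i 1)
  simp only [EuclideanSpace.inner_single_right, conj_trivial, one_mul] at h
  linarith

section StandardBasis

local notation "𝔤" => EuclideanSpace ℝ (Fin 4)

variable {X : Fin 4 → 𝔤}

theorem apply_eq_ite_of_eq_single (hX : ∀ i, X i = EuclideanSpace.single i 1) (j i : Fin 4) :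
    X j i = if i = j then 1 else 0 := by
  rw [hX, PiLp.single_apply]

theorem eq_sum_smul_of_eq_single (hX : ∀ i, X i = EuclideanSpace.single i 1) (v : 𝔤) :
    v = v 0 • X 0 + v 1 • X 1 + v 2 • X 2 + v 3 • X 3 := by
  ext i
  fin_cases i <;> simp [apply_eq_ite_of_eq_single hX]

theorem real_inner_eq_sum_four (u v : 𝔤) : ⟪u, v⟫ = u 0 * v 0 + u 1 * v 1 + u 2 * v 2 + u 3 * v 3 := by
  simp only [PiLp.inner_apply, Fin.sum_univ_four, RCLike.inner_apply, conj_trivial]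
  ring

theorem bracket_eq_of_structure_constants (hX : ∀ i, X i = EuclideanSpace.single i 1)
    {l1 l2 l3 l4 : ℝ} {bracket : 𝔤 →ₗ[ℝ] 𝔤 →ₗ[ℝ] 𝔤}
    (hskew : ∀ x y, bracket x y = - bracket y x)
    (h12 : bracket (X 0) (X 1) = l1 • X 0 + l2 • X 1 + l3 • X 2 + l4 • X 3)
    (h34 : bracket (X 2) (X 3) = -(l1 • X 0 + l2 • X 1 + l3 • X 2 + l4 • X 3))
    (h13 : bracket (X 0) (X 2) = l4 • X 0 - l3 • X 1 + l2 • X 2 - l1 • X 3)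
    (h24 : bracket (X 1) (X 3) = l4 • X 0 - l3 • X 1 + l2 • X 2 - l1 • X 3)
    (h23 : bracket (X 1) (X 2) = 0)
    (h14 : bracket (X 0) (X 3) = 0) (u v : 𝔤) :
    bracket u v = (u 0 * v 1 - u 1 * v 0 - u 2 * v 3 + u 3 * v 2) •
          (l1 • X 0 + l2 • X 1 + l3 • X 2 + l4 • X 3)
        + (u 0 * v 2 - u 2 * v 0 + u 1 * v 3 - u 3 * v 1) •
          (l4 • X 0 - l3 • X 1 + l2 • X 2 - l1 • X 3) := by
  have hdiag : ∀ w, bracket w w = 0 := fun w =>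
    (smul_eq_zero.mp (by rw [two_smul, eq_neg_iff_add_eq_zero.mp (hskew w w)] :
      (2 : ℝ) • bracket w w = 0)).resolve_left two_ne_zero
  conv_lhs => rw [eq_sum_smul_of_eq_single hX u, eq_sum_smul_of_eq_single hX v]
  simp only [map_add, map_smul, LinearMap.add_apply, LinearMap.smul_apply, hdiag,
    hskew (X 1) (X 0), hskew (X 2) (X 0), hskew (X 3) (X 0), hskew (X 2) (X 1),
    hskew (X 3) (X 1), hskew (X 3) (X 2), h12, h34, h13, h24, h23, h14, neg_zero, smul_zero]
  module

theorem natural_connection_eq_smul (hX : ∀ i, X i = EuclideanSpace.single i 1)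
    {l1 l2 l3 l4 : ℝ} {bracket : 𝔤 →ₗ[ℝ] 𝔤 →ₗ[ℝ] 𝔤}
    (hbracket : ∀ u v, bracket u v = (u 0 * v 1 - u 1 * v 0 - u 2 * v 3 + u 3 * v 2) •
          (l1 • X 0 + l2 • X 1 + l3 • X 2 + l4 • X 3)
        + (u 0 * v 2 - u 2 * v 0 + u 1 * v 3 - u 3 * v 1) •
          (l4 • X 0 - l3 • X 1 + l2 • X 2 - l1 • X 3))
    {nabla : 𝔤 → 𝔤 → 𝔤}
    (hKoszul : ∀ x y z, 2 * ⟪nabla x y, z⟫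
      = ⟪bracket x y, z⟫ + ⟪bracket z x, y⟫ + ⟪bracket z y, x⟫)
    {P : 𝔤 →ₗ[ℝ] 𝔤}
    (hP1 : P (X 0) = X 2) (hP2 : P (X 1) = X 3) (hP3 : P (X 2) = X 0) (hP4 : P (X 3) = X 1)
    {θ : 𝔤 →ₗ[ℝ] ℝ}
    (hθ1 : θ (X 0) = 4 * l4) (hθ2 : θ (X 1) = -4 * l3)
    (hθ3 : θ (X 2) = -4 * l2) (hθ4 : θ (X 3) = 4 * l1)
    {Ω : 𝔤} (hΩ : ∀ x, ⟪Ω, x⟫ = θ x)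
    {D : 𝔤 → 𝔤 → 𝔤}
    (hD : ∀ x y, D x y = nabla x y + ((1 : ℝ) / 4) • (⟪x, y⟫ • P Ω - θ (P y) • x)) (u v : 𝔤) :
    D u v = (l3 * u 0 + l4 * u 1 - l1 * u 2 - l2 * u 3) •
      (v 3 • X 0 - v 2 • X 1 + v 1 • X 2 - v 0 • X 3) := by
  have hXapply := apply_eq_ite_of_eq_single hX
  have hP : ∀ w, P w = w 2 • X 0 + w 3 • X 1 + w 0 • X 2 + w 1 • X 3 := fun w => by
    conv_lhs => rw [eq_sum_smul_of_eq_single hX w]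
    simp only [map_add, map_smul, hP1, hP2, hP3, hP4]
    module
  have hθ : ∀ w, θ w = 4 * l4 * w 0 - 4 * l3 * w 1 - 4 * l2 * w 2 + 4 * l1 * w 3 := fun w => by
    conv_lhs => rw [eq_sum_smul_of_eq_single hX w]
    simp only [map_add, map_smul, hθ1, hθ2, hθ3, hθ4, smul_eq_mul]
    ring
  have hΩi : ∀ i, Ω i = θ (X i) := fun i => by
    rw [← hΩ, hX, EuclideanSpace.inner_single_right, conj_trivial, one_mul]
  have hnabla := EuclideanSpace.apply_eq_of_koszul hKoszul u v
  simp only [← hX] at hnabla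
  ext i
  fin_cases i <;>
  · simp only [hD, hnabla, hbracket, hP, hΩi, hθ, real_inner_eq_sum_four, hXapply, PiLp.add_apply,
      PiLp.sub_apply, PiLp.smul_apply, smul_eq_mul, Fin.isValue, Fin.reduceFinMk,
      Fin.zero_eta, Fin.mk_one, Fin.reduceEq, ↓reduceIte]
    ring

end StandardBasis

theorem statement_16_general
    (l1 l2 l3 l4 : ℝ)
    (X : Fin 4 → EuclideanSpace ℝ (Fin 4))
    (hX : ∀ i, X i = EuclideanSpace.single i 1)
    (bracket : EuclideanSpace ℝ (Fin 4) →ₗ[ℝ] EuclideanSpace ℝ (Fin 4) →ₗ[ℝ] EuclideanSpace ℝ (Fin 4))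
    (hskew : ∀ x y, bracket x y = - bracket y x)
    (h12 : bracket (X 0) (X 1) = l1 • X 0 + l2 • X 1 + l3 • X 2 + l4 • X 3)
    (h34 : bracket (X 2) (X 3) = -(l1 • X 0 + l2 • X 1 + l3 • X 2 + l4 • X 3))
    (h13 : bracket (X 0) (X 2) = l4 • X 0 - l3 • X 1 + l2 • X 2 - l1 • X 3)
    (h24 : bracket (X 1) (X 3) = l4 • X 0 - l3 • X 1 + l2 • X 2 - l1 • X 3)
    (h23 : bracket (X 1) (X 2) = 0)
    (h14 : bracket (X 0) (X 3) = 0)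
    (nabla : EuclideanSpace ℝ (Fin 4) → EuclideanSpace ℝ (Fin 4) → EuclideanSpace ℝ (Fin 4))
    (hKoszul : ∀ x y z, 2 * ⟪nabla x y, z⟫
      = ⟪bracket x y, z⟫ + ⟪bracket z x, y⟫ + ⟪bracket z y, x⟫)
    (P : EuclideanSpace ℝ (Fin 4) →ₗ[ℝ] EuclideanSpace ℝ (Fin 4))
    (hP1 : P (X 0) = X 2) (hP2 : P (X 1) = X 3) (hP3 : P (X 2) = X 0) (hP4 : P (X 3) = X 1)
    (θ : EuclideanSpace ℝ (Fin 4) →ₗ[ℝ] ℝ)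
    (hθ1 : θ (X 0) = 4 * l4) (hθ2 : θ (X 1) = -4 * l3)
    (hθ3 : θ (X 2) = -4 * l2) (hθ4 : θ (X 3) = 4 * l1)
    (Ω : EuclideanSpace ℝ (Fin 4)) (hΩ : ∀ x, ⟪Ω, x⟫ = θ x)
    (D : EuclideanSpace ℝ (Fin 4) → EuclideanSpace ℝ (Fin 4) → EuclideanSpace ℝ (Fin 4))
    (hD : ∀ x y, D x y = nabla x y + ((1 : ℝ) / 4) • (⟪x, y⟫ • P Ω - θ (P y) • x)) :
    ∀ x y z, D x (D y z) - D y (D x z) - D (bracket x y) z = 0 := by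
  have hbracket := bracket_eq_of_structure_constants hX hskew h12 h34 h13 h24 h23 h14
  have hDeq := natural_connection_eq_smul hX hbracket hKoszul hP1 hP2 hP3 hP4 hθ1 hθ2 hθ3 hθ4 hΩ hD
  refine curvature_eq_zero_of_eq_smul (fun c v => ?_) hDeq (fun x y => ?_)
  · simp only [PiLp.smul_apply, smul_eq_mul]
    module
  · simp only [hbracket, PiLp.add_apply, PiLp.sub_apply, PiLp.smul_apply, smul_eq_mul,
      apply_eq_ite_of_eq_single hX, Fin.isValue, Fin.reduceEq, ↓reduceIte]
    ring

/-- On the example manifold of the paper, the natural connection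
`Dₓy = ∇ₓy + (1/4){g(x,y)PΩ − θ(Py)x}` is flat:
`DₓD_y z − D_y Dₓ z − D_{[x,y]} z = 0`. -/
theorem statement_16
    (l1 l2 l3 l4 : ℝ)
    (X : Fin 4 → EuclideanSpace ℝ (Fin 4))
    (hX : ∀ i, X i = EuclideanSpace.single i 1)
    (bracket : EuclideanSpace ℝ (Fin 4) →ₗ[ℝ] EuclideanSpace ℝ (Fin 4) →ₗ[ℝ] EuclideanSpace ℝ (Fin 4))
    (hskew : ∀ x y, bracket x y = - bracket y x)
    (hjacobi : ∀ x y z,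
      bracket (bracket x y) z + bracket (bracket y z) x + bracket (bracket z x) y = 0)
    (h12 : bracket (X 0) (X 1) = l1 • X 0 + l2 • X 1 + l3 • X 2 + l4 • X 3)
    (h34 : bracket (X 2) (X 3) = -(l1 • X 0 + l2 • X 1 + l3 • X 2 + l4 • X 3))
    (h13 : bracket (X 0) (X 2) = l4 • X 0 - l3 • X 1 + l2 • X 2 - l1 • X 3)
    (h24 : bracket (X 1) (X 3) = l4 • X 0 - l3 • X 1 + l2 • X 2 - l1 • X 3)
    (h23 : bracket (X 1) (X 2) = 0)
    (h14 : bracket (X 0) (X 3) = 0)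
    (nabla : EuclideanSpace ℝ (Fin 4) → EuclideanSpace ℝ (Fin 4) → EuclideanSpace ℝ (Fin 4))
    (hKoszul : ∀ x y z, 2 * ⟪nabla x y, z⟫
      = ⟪bracket x y, z⟫ + ⟪bracket z x, y⟫ + ⟪bracket z y, x⟫)
    (P : EuclideanSpace ℝ (Fin 4) →ₗ[ℝ] EuclideanSpace ℝ (Fin 4))
    (hP1 : P (X 0) = X 2) (hP2 : P (X 1) = X 3) (hP3 : P (X 2) = X 0) (hP4 : P (X 3) = X 1)
    (θ : EuclideanSpace ℝ (Fin 4) →ₗ[ℝ] ℝ)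
    (hθ1 : θ (X 0) = 4 * l4) (hθ2 : θ (X 1) = -4 * l3)
    (hθ3 : θ (X 2) = -4 * l2) (hθ4 : θ (X 3) = 4 * l1)
    (Ω : EuclideanSpace ℝ (Fin 4)) (hΩ : ∀ x, ⟪Ω, x⟫ = θ x)
    (D : EuclideanSpace ℝ (Fin 4) → EuclideanSpace ℝ (Fin 4) → EuclideanSpace ℝ (Fin 4))
    (hD : ∀ x y, D x y = nabla x y + ((1 : ℝ) / 4) • (⟪x, y⟫ • P Ω - θ (P y) • x)) :
    ∀ x y z, D x (D y z) - D y (D x z) - D (bracket x y) z = 0 :=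
  statement_16_general l1 l2 l3 l4 X hX bracket hskew h12 h34 h13 h24 h23 h14 nabla hKoszul P hP1
    hP2 hP3 hP4 θ hθ1 hθ2 hθ3 hθ4 Ω hΩ D hD
end

section
/- Let λ₁,λ₂,λ₃,λ₄ ∈ ℝ and let 𝔤 be the 4-dimensional real Lie algebra with orthonormal basis X₁,X₂,X₃,X₄ (inner product g), brackets [X₁,X₂] = −[X₃,X₄] = λ₁X₁ + λ₂X₂ + λ₃X₃ + λ₄X₄, [X₁,X₃] = [X₂,X₄] = λ₄X₁ − λ₃X₂ + λ₂X₃ − λ₁X₄, [X₂,X₃] = [X₁,X₄] = 0, and P the linear map with PX₁ = X₃, PX₂ = X₄, PX₃ = X₁, PX₄ = X₂. Define ∇ by 2g(∇ₓy,z) = g([x,y],z) + g([z,x],y) + g([z,y],x), the 1-form θ with θ(X₁) = 4λ₄, θ(X₂) = −4λ₃, θ(X₃) = −4λ₂, θ(X₄) = 4λ₁, the vector Ω with g(Ω,x) = θ(x), and Dₓy = ∇ₓy + (1/4){g(x,y)PΩ − θ(Py)x}. Then θ(DₓᵢXⱼ) = 0 for all i,j ∈ {1,2,3,4} if and only if λ₁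 = λ₂ = λ₃ = λ₄ = 0; equivalently, the Lee form θ (and hence the torsion of D) is D-parallel only in the trivial case where all λᵢ vanish. -/
set_option maxHeartbeats 1000000


open scoped RealInnerProductSpace

/-- On the example manifold of the paper, the Lee form `θ` (hence the
torsion of the natural connection `D`) is `D`-parallel, i.e. `θ(D_{Xᵢ}Xⱼ) = 0` for all
`i,j`, iff `λ₁ = λ₂ = λ₃ = λ₄ = 0`. -/
theorem statement_17
    (l1 l2 l3 l4 : ℝ)
    (X : Fin 4 → EuclideanSpace ℝ (Fin 4))
    (hX : ∀ i, X i = EuclideanSpace.single i 1)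
    (bracket : EuclideanSpace ℝ (Fin 4) →ₗ[ℝ] EuclideanSpace ℝ (Fin 4) →ₗ[ℝ] EuclideanSpace ℝ (Fin 4))
    (hskew : ∀ x y, bracket x y = - bracket y x)
    (hjacobi : ∀ x y z,
      bracket (bracket x y) z + bracket (bracket y z) x + bracket (bracket z x) y = 0)
    (h12 : bracket (X 0) (X 1) = l1 • X 0 + l2 • X 1 + l3 • X 2 + l4 • X 3)
    (h34 : bracket (X 2) (X 3) = -(l1 • X 0 + l2 • X 1 + l3 • X 2 + l4 • X 3))
    (h13 : bracket (X 0) (X 2) = l4 • X 0 - l3 • X 1 + l2 • X 2 - l1 • X 3)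
    (h24 : bracket (X 1) (X 3) = l4 • X 0 - l3 • X 1 + l2 • X 2 - l1 • X 3)
    (h23 : bracket (X 1) (X 2) = 0)
    (h14 : bracket (X 0) (X 3) = 0)
    (nabla : EuclideanSpace ℝ (Fin 4) → EuclideanSpace ℝ (Fin 4) → EuclideanSpace ℝ (Fin 4))
    (hKoszul : ∀ x y z, 2 * ⟪nabla x y, z⟫
      = ⟪bracket x y, z⟫ + ⟪bracket z x, y⟫ + ⟪bracket z y, x⟫)
    (P : EuclideanSpace ℝ (Fin 4) →ₗ[ℝ] EuclideanSpace ℝ (Fin 4))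
    (hP1 : P (X 0) = X 2) (hP2 : P (X 1) = X 3) (hP3 : P (X 2) = X 0) (hP4 : P (X 3) = X 1)
    (θ : EuclideanSpace ℝ (Fin 4) →ₗ[ℝ] ℝ)
    (hθ1 : θ (X 0) = 4 * l4) (hθ2 : θ (X 1) = -4 * l3)
    (hθ3 : θ (X 2) = -4 * l2) (hθ4 : θ (X 3) = 4 * l1)
    (Ω : EuclideanSpace ℝ (Fin 4)) (hΩ : ∀ x, ⟪Ω, x⟫ = θ x)
    (D : EuclideanSpace ℝ (Fin 4) → EuclideanSpace ℝ (Fin 4) → EuclideanSpace ℝ (Fin 4))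
    (hD : ∀ x y, D x y = nabla x y + ((1 : ℝ) / 4) • (⟪x, y⟫ • P Ω - θ (P y) • x)) :
    (∀ i j, θ (D (X i) (X j)) = 0) ↔ (l1 = 0 ∧ l2 = 0 ∧ l3 = 0 ∧ l4 = 0) := by

  -- basic facts
  have hxx : ∀ x, bracket x x = 0 := by
    intro x
    have h := hskew x x
    have h2 : bracket x x + bracket x x = 0 := by nth_rewrite 1 [h]; abel
    have h3 : (2 : ℝ) • bracket x x = 0 := by rw [two_smul]; exact h2
    simpa using (smul_eq_zero.mp h3).resolve_left (by norm_num)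
  have hΩc : ∀ i : Fin 4, Ω i = θ (X i) := by
    intro i
    have h := hΩ (X i)
    nth_rewrite 1 [hX i] at h
    simpa [EuclideanSpace.inner_single_right] using h
  have c0 : Ω 0 = 4*l4 := by rw [hΩc]; exact hθ1
  have c1 : Ω 1 = -4*l3 := by rw [hΩc]; exact hθ2
  have c2 : Ω 2 = -4*l2 := by rw [hΩc]; exact hθ3
  have c3 : Ω 3 = 4*l1 := by rw [hΩc]; exact hθ4
  have hΩdec : Ω = (4*l4) • X 0 + (-4*l3) • X 1 + (-4*l2) • X 2 + (4*l1) • X 3 := by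
    apply PiLp.ext
    intro i
    fin_cases i <;>
      simp [c0, c1, c2, c3, hX, PiLp.add_apply, PiLp.smul_apply,
        EuclideanSpace.single_apply]
  have iab : ∀ a b : Fin 4, ⟪X a, X b⟫ = if a = b then (1:ℝ) else 0 := by
    intro a b
    rw [hX, hX]
    have := EuclideanSpace.inner_single_left (𝕜 := ℝ) a 1 (EuclideanSpace.single b 1)
    simpa [EuclideanSpace.single_apply, eq_comm] using this
  -- bracket table
  have b10 : bracket (X 1) (X 0) = -(l1 • X 0 + l2 • X 1 + l3 • X 2 + l4 • X 3) := by
    rw [hskew, h12]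
  have b32 : bracket (X 3) (X 2) = -(-(l1 • X 0 + l2 • X 1 + l3 • X 2 + l4 • X 3)) := by
    rw [hskew, h34]
  have b20 : bracket (X 2) (X 0) = -(l4 • X 0 - l3 • X 1 + l2 • X 2 - l1 • X 3) := by
    rw [hskew, h13]
  have b31 : bracket (X 3) (X 1) = -(l4 • X 0 - l3 • X 1 + l2 • X 2 - l1 • X 3) := by
    rw [hskew, h24]
  have b21 : bracket (X 2) (X 1) = 0 := by rw [hskew, h23]; simp
  have b30 : bracket (X 3) (X 0) = 0 := by rw [hskew, h14]; simp
  have b00 := hxx (X 0)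
  have b11 := hxx (X 1)
  have b22 := hxx (X 2)
  have b33 := hxx (X 3)
  -- θ (P Ω)
  have hPΩ : θ (P Ω) = -32*l2*l4 - 32*l1*l3 := by
    rw [hΩdec]
    simp only [map_add, map_smul, hP1, hP2, hP3, hP4, smul_eq_mul, hθ1, hθ2, hθ3, hθ4]
    ring
  -- general formula for θ (D Xi Xj)
  have hDθ : ∀ i j, 2 * θ (D (X i) (X j))
      = θ (bracket (X i) (X j)) + ⟪bracket Ω (X i), X j⟫ + ⟪bracket Ω (X j), X i⟫
        + (1/2) * (⟪X i, X j⟫ * θ (P Ω)) - (1/2) * (θ (P (X j)) * θ (X i)) := by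
    intro i j
    have hk := hKoszul (X i) (X j) Ω
    have hL : ⟪nabla (X i) (X j), Ω⟫ = θ (nabla (X i) (X j)) := by
      rw [real_inner_comm]; exact hΩ _
    have hB : ⟪bracket (X i) (X j), Ω⟫ = θ (bracket (X i) (X j)) := by
      rw [real_inner_comm]; exact hΩ _
    rw [hL, hB] at hk
    rw [hD]
    simp only [map_add, map_smul, map_sub, smul_eq_mul]
    linarith
  -- the four key values
  have e20 : θ (D (X 2) (X 0)) = 4*l1^2 := by
    have h := hDθ 2 0
    rw [hΩdec] at h
    simp only [map_add, map_smul, map_neg, LinearMap.add_apply, LinearMap.smul_apply,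
      LinearMap.neg_apply, LinearMap.zero_apply,
      b10, b32, b20, b31, b21, b30, b00, b11, b22, b33, h12, h34, h13, h24, h23, h14,
      inner_add_left, inner_sub_left, inner_neg_left, real_inner_smul_left,
      inner_zero_left, smul_eq_mul, smul_add, smul_sub, smul_neg, smul_zero,
      hθ1, hθ2, hθ3, hθ4, hP1, hP2, hP3, hP4, hPΩ, iab, Fin.reduceEq, reduceIte] at h
    norm_num at h
    simp only [hθ1, hθ2, hθ3, hθ4] at h
    linear_combination h / 2
  have e31 : θ (D (X 3) (X 1)) = 4*l2^2 := by
    have h := hDθ 3 1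
    rw [hΩdec] at h
    simp only [map_add, map_smul, map_neg, LinearMap.add_apply, LinearMap.smul_apply,
      LinearMap.neg_apply, LinearMap.zero_apply,
      b10, b32, b20, b31, b21, b30, b00, b11, b22, b33, h12, h34, h13, h24, h23, h14,
      inner_add_left, inner_sub_left, inner_neg_left, real_inner_smul_left,
      inner_zero_left, smul_eq_mul, smul_add, smul_sub, smul_neg, smul_zero,
      hθ1, hθ2, hθ3, hθ4, hP1, hP2, hP3, hP4, hPΩ, iab, Fin.reduceEq, reduceIte] at h
    norm_num at h
    simp only [hθ1, hθ2, hθ3, hθ4] at h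
    linear_combination h / 2
  have e02 : θ (D (X 0) (X 2)) = 4*l3^2 := by
    have h := hDθ 0 2
    rw [hΩdec] at h
    simp only [map_add, map_smul, map_neg, LinearMap.add_apply, LinearMap.smul_apply,
      LinearMap.neg_apply, LinearMap.zero_apply,
      b10, b32, b20, b31, b21, b30, b00, b11, b22, b33, h12, h34, h13, h24, h23, h14,
      inner_add_left, inner_sub_left, inner_neg_left, real_inner_smul_left,
      inner_zero_left, smul_eq_mul, smul_add, smul_sub, smul_neg, smul_zero,
      hθ1, hθ2, hθ3, hθ4, hP1, hP2, hP3, hP4, hPΩ, iab, Fin.reduceEq, reduceIte] at h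
    norm_num at h
    simp only [hθ1, hθ2, hθ3, hθ4] at h
    linear_combination h / 2
  have e13 : θ (D (X 1) (X 3)) = 4*l4^2 := by
    have h := hDθ 1 3
    rw [hΩdec] at h
    simp only [map_add, map_smul, map_neg, LinearMap.add_apply, LinearMap.smul_apply,
      LinearMap.neg_apply, LinearMap.zero_apply,
      b10, b32, b20, b31, b21, b30, b00, b11, b22, b33, h12, h34, h13, h24, h23, h14,
      inner_add_left, inner_sub_left, inner_neg_left, real_inner_smul_left,
      inner_zero_left, smul_eq_mul, smul_add, smul_sub, smul_neg, smul_zero,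
      hθ1, hθ2, hθ3, hθ4, hP1, hP2, hP3, hP4, hPΩ, iab, Fin.reduceEq, reduceIte] at h
    norm_num at h
    simp only [hθ1, hθ2, hθ3, hθ4] at h
    linear_combination h / 2
  constructor
  · intro h
    have k1 : (4:ℝ)*l1^2 = 0 := by rw [← e20]; exact h 2 0
    have k2 : (4:ℝ)*l2^2 = 0 := by rw [← e31]; exact h 3 1
    have k3 : (4:ℝ)*l3^2 = 0 := by rw [← e02]; exact h 0 2
    have k4 : (4:ℝ)*l4^2 = 0 := by rw [← e13]; exact h 1 3
    refine ⟨?_, ?_, ?_, ?_⟩ <;>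
      [ (exact pow_eq_zero_iff two_ne_zero |>.mp (by linarith));
        (exact pow_eq_zero_iff two_ne_zero |>.mp (by linarith));
        (exact pow_eq_zero_iff two_ne_zero |>.mp (by linarith));
        (exact pow_eq_zero_iff two_ne_zero |>.mp (by linarith)) ]
  · rintro ⟨rfl, rfl, rfl, rfl⟩
    have hΩ0 : Ω = 0 := by
      apply PiLp.ext
      intro i
      fin_cases i <;> simp [c0, c1, c2, c3]
    intro i j
    rw [← hΩ, hΩ0]
    simp
end
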